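/- The E6 hyperpolynomial of the (4,3) torus knot satisfies the following five specialization identities in the Laurent polynomial ring Z[q^{±1}, t^{±1}]: (i) HD43(q,t,-1) = JDE6_43(q,t); (ii) HD43(q,t,-t^{-4}) = JDD5_43(q,t); (iii) HD43(q,t,-t^{-5}) = 1 + q*t + q^2*t + q^2*t^2 + q^3*t^3 + q^3*t^14 - q*t^7 - q^2*t^7 - q^2*t^8 - q^3*t^8 - q^3*t^9 (the DAHA-Jones polynomial of type (A6, omega_1) for the (4,3) torus knot); (iv) HD43(q,t,-t^{-8}) = 1; (v) HD43(q,t,-q^{-1}*t^{-12}) = q^6*t^24. -/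
import Mathlib


set_option maxHeartbeats 1000000
set_option maxRecDepth 100000

open LaurentPolynomial

/-- The E6 hyperpolynomial of the (4,3) torus knot (DAHA conventions). -/
def HD43 {R : Type*} [CommRing R] (q t a : R) : R :=
  1 + q*t + q*t^4 + q*t^9*a + q*t^12*a + q^2*t + q^2*t^2 + q^2*t^4 + q^2*t^5 + q^2*t^8
  + q^2*t^9*a + q^2*t^10*a + q^2*t^12*a + 2*q^2*t^13*a + q^2*t^16*a + q^2*t^21*a^2
  + q^3*t^3 + q^3*t^5 + q^3*t^6 + q^3*t^8 + q^3*t^9 + q^3*t^10*a + q^3*t^11*a + q^3*t^12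
  + 3*q^3*t^13*a + 2*q^3*t^14*a + 2*q^3*t^16*a + 2*q^3*t^17*a + q^3*t^18*a^2 + q^3*t^20*a
  + 2*q^3*t^21*a^2 + q^3*t^22*a^2 + q^3*t^24*a^2 + q^3*t^25*a^2 + q^4*t^8 + q^4*t^9
  + q^4*t^10 + q^4*t^12 + q^4*t^13 + q^4*t^13*a + q^4*t^14*a + q^4*t^15*a + q^4*t^16
  + q^4*t^16*a + 3*q^4*t^17*a + 2*q^4*t^18*a + 2*q^4*t^20*a + 2*q^4*t^21*a + q^4*t^21*a^2
  + 2*q^4*t^22*a^2 + q^4*t^23*a^2 + q^4*t^24*a + 3*q^4*t^25*a^2 + q^4*t^26*a^2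
  + q^4*t^28*a^2 + q^4*t^29*a^2 + q^4*t^30*a^3 + q^4*t^33*a^3 + q^5*t^13 + q^5*t^16
  + q^5*t^17 + q^5*t^17*a + q^5*t^18*a + q^5*t^20 + q^5*t^20*a + 3*q^5*t^21*a + q^5*t^22*a
  + q^5*t^22*a^2 + 2*q^5*t^24*a + 2*q^5*t^25*a + 2*q^5*t^25*a^2 + 2*q^5*t^26*a^2
  + q^5*t^28*a + q^5*t^28*a^2 + 3*q^5*t^29*a^2 + q^5*t^30*a^2 + q^5*t^30*a^3 + q^5*t^32*a^2
  + q^5*t^33*a^2 + q^5*t^33*a^3 + q^5*t^34*a^3 + q^5*t^37*a^3 + q^6*t^24 + q^6*t^25*a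
  + q^6*t^28*a + q^6*t^29*a + q^6*t^29*a^2 + q^6*t^30*a^2 + q^6*t^32*a + 2*q^6*t^33*a^2
  + q^6*t^34*a^3 + q^6*t^36*a^2 + q^6*t^37*a^2 + q^6*t^37*a^3 + q^6*t^38*a^3 + q^6*t^41*a^3
  + q^6*t^42*a^4

/-- The DAHA-Jones polynomial of type (E6, ω₁) for the (4,3) torus knot. -/
def JDE6_43 {R : Type*} [CommRing R] (q t : R) : R :=
  1 + q*(t + t^4 - t^9 - t^12)
  + q^2*(t + t^2 + t^4 + t^5 + t^8 - t^9 - t^10 - t^12 - 2*t^13 - t^16 + t^21)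
  + q^3*(t^3 + t^5 + t^6 + t^8 + t^9 - t^10 - t^11 + t^12 - 3*t^13 - 2*t^14 - 2*t^16
      - 2*t^17 + t^18 - t^20 + 2*t^21 + t^22 + t^24 + t^25)
  + q^4*(t^8 + t^9 + t^10 + t^12 - t^14 - t^15 - 3*t^17 - 2*t^18 - 2*t^20 - t^21 + 2*t^22
      + t^23 - t^24 + 3*t^25 + t^26 + t^28 + t^29 - t^30 - t^33)
  + q^5*(t^13 + t^16 - t^18 - 3*t^21 - 2*t^24 + 2*t^26 + 3*t^29 + t^32 - t^34 - t^37)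
  + q^6*(t^24 - t^25 - t^28 + t^30 - t^32 + 2*t^33 - t^34 + t^36 - t^38 - t^41 + t^42)

/-- The DAHA-Jones polynomial of type (D5, ω₁) for the (4,3) torus knot. -/
def JDD5_43 {R : Type*} [CommRing R] (q t : R) : R :=
  1 + q*t + q*t^4 - q*t^5 - q*t^8 + q^2*t + q^2*t^2 + q^2*t^4 - q^2*t^6 - 2*q^2*t^9
  - q^2*t^12 + q^2*t^13 + q^3*t^3 + q^3*t^5 - q^3*t^7 + q^3*t^8 - 2*q^3*t^9 - q^3*t^10
  - q^3*t^12 + q^3*t^14 + q^3*t^17 + q^4*t^8 - q^4*t^11 - q^4*t^13 + q^4*t^15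
  - q^4*t^16 + q^4*t^17

/-- The Laurent polynomial ring ℤ[q^{±1}, t^{±1}]: `q` is the inner variable, `t` the outer. -/
abbrev Rqt : Type := LaurentPolynomial (LaurentPolynomial ℤ)

/-- The variable q in ℤ[q^{±1}, t^{±1}]. -/
noncomputable def qv : Rqt := C (T 1)
/-- The variable t in ℤ[q^{±1}, t^{±1}]. -/
noncomputable def tv : Rqt := T 1
/-- The element q⁻¹ in ℤ[q^{±1}, t^{±1}]. -/
noncomputable def qiv : Rqt := C (T (-1))
/-- The element t⁻¹ in ℤ[q^{±1}, t^{±1}]. -/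
noncomputable def tiv : Rqt := T (-1)

set_option linter.unusedVariables false

lemma key1 {R : Type*} [CommRing R] (q t qi ti : R) (hq : q*qi=1) (ht : t*ti=1) :
    HD43 q t (-1) = JDE6_43 q t := by
  simp only [HD43, JDE6_43]
  ring

lemma key2 {R : Type*} [CommRing R] (q t qi ti : R) (hq : q*qi=1) (ht : t*ti=1) :
    HD43 q t (-(ti^4)) = JDD5_43 q t := by
  have f0 : q*t^9*ti^4 = q*t^5 := by linear_combination (q*t^5 + q*t^6*ti + q*t^7*ti^2 + q*t^8*ti^3) * ht
  have f1 : q*t^12*ti^4 = q*t^8 := by linear_combination (q*t^8 + q*t^9*ti + q*t^10*ti^2 + q*t^11*ti^3) * ht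
  have f2 : q^2*t^9*ti^4 = q^2*t^5 := by linear_combination (q^2*t^5 + q^2*t^6*ti + q^2*t^7*ti^2 + q^2*t^8*ti^3) * ht
  have f3 : q^2*t^10*ti^4 = q^2*t^6 := by linear_combination (q^2*t^6 + q^2*t^7*ti + q^2*t^8*ti^2 + q^2*t^9*ti^3) * ht
  have f4 : q^2*t^12*ti^4 = q^2*t^8 := by linear_combination (q^2*t^8 + q^2*t^9*ti + q^2*t^10*ti^2 + q^2*t^11*ti^3) * ht
  have f5 : q^2*t^13*ti^4 = q^2*t^9 := by linear_combination (q^2*t^9 + q^2*t^10*ti + q^2*t^11*ti^2 + q^2*t^12*ti^3) * ht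
  have f6 : q^2*t^16*ti^4 = q^2*t^12 := by linear_combination (q^2*t^12 + q^2*t^13*ti + q^2*t^14*ti^2 + q^2*t^15*ti^3) * ht
  have f7 : q^2*t^21*ti^8 = q^2*t^13 := by linear_combination (q^2*t^13 + q^2*t^14*ti + q^2*t^15*ti^2 + q^2*t^16*ti^3 + q^2*t^17*ti^4 + q^2*t^18*ti^5 + q^2*t^19*ti^6 + q^2*t^20*ti^7) * ht
  have f8 : q^3*t^10*ti^4 = q^3*t^6 := by linear_combination (q^3*t^6 + q^3*t^7*ti + q^3*t^8*ti^2 + q^3*t^9*ti^3) * ht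
  have f9 : q^3*t^11*ti^4 = q^3*t^7 := by linear_combination (q^3*t^7 + q^3*t^8*ti + q^3*t^9*ti^2 + q^3*t^10*ti^3) * ht
  have f10 : q^3*t^13*ti^4 = q^3*t^9 := by linear_combination (q^3*t^9 + q^3*t^10*ti + q^3*t^11*ti^2 + q^3*t^12*ti^3) * ht
  have f11 : q^3*t^14*ti^4 = q^3*t^10 := by linear_combination (q^3*t^10 + q^3*t^11*ti + q^3*t^12*ti^2 + q^3*t^13*ti^3) * ht
  have f12 : q^3*t^16*ti^4 = q^3*t^12 := by linear_combination (q^3*t^12 + q^3*t^13*ti + q^3*t^14*ti^2 + q^3*t^15*ti^3) * ht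
  have f13 : q^3*t^17*ti^4 = q^3*t^13 := by linear_combination (q^3*t^13 + q^3*t^14*ti + q^3*t^15*ti^2 + q^3*t^16*ti^3) * ht
  have f14 : q^3*t^18*ti^8 = q^3*t^10 := by linear_combination (q^3*t^10 + q^3*t^11*ti + q^3*t^12*ti^2 + q^3*t^13*ti^3 + q^3*t^14*ti^4 + q^3*t^15*ti^5 + q^3*t^16*ti^6 + q^3*t^17*ti^7) * ht
  have f15 : q^3*t^20*ti^4 = q^3*t^16 := by linear_combination (q^3*t^16 + q^3*t^17*ti + q^3*t^18*ti^2 + q^3*t^19*ti^3) * ht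
  have f16 : q^3*t^21*ti^8 = q^3*t^13 := by linear_combination (q^3*t^13 + q^3*t^14*ti + q^3*t^15*ti^2 + q^3*t^16*ti^3 + q^3*t^17*ti^4 + q^3*t^18*ti^5 + q^3*t^19*ti^6 + q^3*t^20*ti^7) * ht
  have f17 : q^3*t^22*ti^8 = q^3*t^14 := by linear_combination (q^3*t^14 + q^3*t^15*ti + q^3*t^16*ti^2 + q^3*t^17*ti^3 + q^3*t^18*ti^4 + q^3*t^19*ti^5 + q^3*t^20*ti^6 + q^3*t^21*ti^7) * ht
  have f18 : q^3*t^24*ti^8 = q^3*t^16 := by linear_combination (q^3*t^16 + q^3*t^17*ti + q^3*t^18*ti^2 + q^3*t^19*ti^3 + q^3*t^20*ti^4 + q^3*t^21*ti^5 + q^3*t^22*ti^6 + q^3*t^23*ti^7) * ht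
  have f19 : q^3*t^25*ti^8 = q^3*t^17 := by linear_combination (q^3*t^17 + q^3*t^18*ti + q^3*t^19*ti^2 + q^3*t^20*ti^3 + q^3*t^21*ti^4 + q^3*t^22*ti^5 + q^3*t^23*ti^6 + q^3*t^24*ti^7) * ht
  have f20 : q^4*t^13*ti^4 = q^4*t^9 := by linear_combination (q^4*t^9 + q^4*t^10*ti + q^4*t^11*ti^2 + q^4*t^12*ti^3) * ht
  have f21 : q^4*t^14*ti^4 = q^4*t^10 := by linear_combination (q^4*t^10 + q^4*t^11*ti + q^4*t^12*ti^2 + q^4*t^13*ti^3) * ht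
  have f22 : q^4*t^15*ti^4 = q^4*t^11 := by linear_combination (q^4*t^11 + q^4*t^12*ti + q^4*t^13*ti^2 + q^4*t^14*ti^3) * ht
  have f23 : q^4*t^16*ti^4 = q^4*t^12 := by linear_combination (q^4*t^12 + q^4*t^13*ti + q^4*t^14*ti^2 + q^4*t^15*ti^3) * ht
  have f24 : q^4*t^17*ti^4 = q^4*t^13 := by linear_combination (q^4*t^13 + q^4*t^14*ti + q^4*t^15*ti^2 + q^4*t^16*ti^3) * ht
  have f25 : q^4*t^18*ti^4 = q^4*t^14 := by linear_combination (q^4*t^14 + q^4*t^15*ti + q^4*t^16*ti^2 + q^4*t^17*ti^3) * ht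
  have f26 : q^4*t^20*ti^4 = q^4*t^16 := by linear_combination (q^4*t^16 + q^4*t^17*ti + q^4*t^18*ti^2 + q^4*t^19*ti^3) * ht
  have f27 : q^4*t^21*ti^4 = q^4*t^17 := by linear_combination (q^4*t^17 + q^4*t^18*ti + q^4*t^19*ti^2 + q^4*t^20*ti^3) * ht
  have f28 : q^4*t^21*ti^8 = q^4*t^13 := by linear_combination (q^4*t^13 + q^4*t^14*ti + q^4*t^15*ti^2 + q^4*t^16*ti^3 + q^4*t^17*ti^4 + q^4*t^18*ti^5 + q^4*t^19*ti^6 + q^4*t^20*ti^7) * ht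
  have f29 : q^4*t^22*ti^8 = q^4*t^14 := by linear_combination (q^4*t^14 + q^4*t^15*ti + q^4*t^16*ti^2 + q^4*t^17*ti^3 + q^4*t^18*ti^4 + q^4*t^19*ti^5 + q^4*t^20*ti^6 + q^4*t^21*ti^7) * ht
  have f30 : q^4*t^23*ti^8 = q^4*t^15 := by linear_combination (q^4*t^15 + q^4*t^16*ti + q^4*t^17*ti^2 + q^4*t^18*ti^3 + q^4*t^19*ti^4 + q^4*t^20*ti^5 + q^4*t^21*ti^6 + q^4*t^22*ti^7) * ht
  have f31 : q^4*t^24*ti^4 = q^4*t^20 := by linear_combination (q^4*t^20 + q^4*t^21*ti + q^4*t^22*ti^2 + q^4*t^23*ti^3) * ht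
  have f32 : q^4*t^25*ti^8 = q^4*t^17 := by linear_combination (q^4*t^17 + q^4*t^18*ti + q^4*t^19*ti^2 + q^4*t^20*ti^3 + q^4*t^21*ti^4 + q^4*t^22*ti^5 + q^4*t^23*ti^6 + q^4*t^24*ti^7) * ht
  have f33 : q^4*t^26*ti^8 = q^4*t^18 := by linear_combination (q^4*t^18 + q^4*t^19*ti + q^4*t^20*ti^2 + q^4*t^21*ti^3 + q^4*t^22*ti^4 + q^4*t^23*ti^5 + q^4*t^24*ti^6 + q^4*t^25*ti^7) * ht
  have f34 : q^4*t^28*ti^8 = q^4*t^20 := by linear_combination (q^4*t^20 + q^4*t^21*ti + q^4*t^22*ti^2 + q^4*t^23*ti^3 + q^4*t^24*ti^4 + q^4*t^25*ti^5 + q^4*t^26*ti^6 + q^4*t^27*ti^7) * ht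
  have f35 : q^4*t^29*ti^8 = q^4*t^21 := by linear_combination (q^4*t^21 + q^4*t^22*ti + q^4*t^23*ti^2 + q^4*t^24*ti^3 + q^4*t^25*ti^4 + q^4*t^26*ti^5 + q^4*t^27*ti^6 + q^4*t^28*ti^7) * ht
  have f36 : q^4*t^30*ti^12 = q^4*t^18 := by linear_combination (q^4*t^18 + q^4*t^19*ti + q^4*t^20*ti^2 + q^4*t^21*ti^3 + q^4*t^22*ti^4 + q^4*t^23*ti^5 + q^4*t^24*ti^6 + q^4*t^25*ti^7 + q^4*t^26*ti^8 + q^4*t^27*ti^9 + q^4*t^28*ti^10 + q^4*t^29*ti^11) * ht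
  have f37 : q^4*t^33*ti^12 = q^4*t^21 := by linear_combination (q^4*t^21 + q^4*t^22*ti + q^4*t^23*ti^2 + q^4*t^24*ti^3 + q^4*t^25*ti^4 + q^4*t^26*ti^5 + q^4*t^27*ti^6 + q^4*t^28*ti^7 + q^4*t^29*ti^8 + q^4*t^30*ti^9 + q^4*t^31*ti^10 + q^4*t^32*ti^11) * ht
  have f38 : q^5*t^17*ti^4 = q^5*t^13 := by linear_combination (q^5*t^13 + q^5*t^14*ti + q^5*t^15*ti^2 + q^5*t^16*ti^3) * ht
  have f39 : q^5*t^18*ti^4 = q^5*t^14 := by linear_combination (q^5*t^14 + q^5*t^15*ti + q^5*t^16*ti^2 + q^5*t^17*ti^3) * ht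
  have f40 : q^5*t^20*ti^4 = q^5*t^16 := by linear_combination (q^5*t^16 + q^5*t^17*ti + q^5*t^18*ti^2 + q^5*t^19*ti^3) * ht
  have f41 : q^5*t^21*ti^4 = q^5*t^17 := by linear_combination (q^5*t^17 + q^5*t^18*ti + q^5*t^19*ti^2 + q^5*t^20*ti^3) * ht
  have f42 : q^5*t^22*ti^4 = q^5*t^18 := by linear_combination (q^5*t^18 + q^5*t^19*ti + q^5*t^20*ti^2 + q^5*t^21*ti^3) * ht
  have f43 : q^5*t^22*ti^8 = q^5*t^14 := by linear_combination (q^5*t^14 + q^5*t^15*ti + q^5*t^16*ti^2 + q^5*t^17*ti^3 + q^5*t^18*ti^4 + q^5*t^19*ti^5 + q^5*t^20*ti^6 + q^5*t^21*ti^7) * ht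
  have f44 : q^5*t^24*ti^4 = q^5*t^20 := by linear_combination (q^5*t^20 + q^5*t^21*ti + q^5*t^22*ti^2 + q^5*t^23*ti^3) * ht
  have f45 : q^5*t^25*ti^4 = q^5*t^21 := by linear_combination (q^5*t^21 + q^5*t^22*ti + q^5*t^23*ti^2 + q^5*t^24*ti^3) * ht
  have f46 : q^5*t^25*ti^8 = q^5*t^17 := by linear_combination (q^5*t^17 + q^5*t^18*ti + q^5*t^19*ti^2 + q^5*t^20*ti^3 + q^5*t^21*ti^4 + q^5*t^22*ti^5 + q^5*t^23*ti^6 + q^5*t^24*ti^7) * ht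
  have f47 : q^5*t^26*ti^8 = q^5*t^18 := by linear_combination (q^5*t^18 + q^5*t^19*ti + q^5*t^20*ti^2 + q^5*t^21*ti^3 + q^5*t^22*ti^4 + q^5*t^23*ti^5 + q^5*t^24*ti^6 + q^5*t^25*ti^7) * ht
  have f48 : q^5*t^28*ti^4 = q^5*t^24 := by linear_combination (q^5*t^24 + q^5*t^25*ti + q^5*t^26*ti^2 + q^5*t^27*ti^3) * ht
  have f49 : q^5*t^28*ti^8 = q^5*t^20 := by linear_combination (q^5*t^20 + q^5*t^21*ti + q^5*t^22*ti^2 + q^5*t^23*ti^3 + q^5*t^24*ti^4 + q^5*t^25*ti^5 + q^5*t^26*ti^6 + q^5*t^27*ti^7) * ht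
  have f50 : q^5*t^29*ti^8 = q^5*t^21 := by linear_combination (q^5*t^21 + q^5*t^22*ti + q^5*t^23*ti^2 + q^5*t^24*ti^3 + q^5*t^25*ti^4 + q^5*t^26*ti^5 + q^5*t^27*ti^6 + q^5*t^28*ti^7) * ht
  have f51 : q^5*t^30*ti^8 = q^5*t^22 := by linear_combination (q^5*t^22 + q^5*t^23*ti + q^5*t^24*ti^2 + q^5*t^25*ti^3 + q^5*t^26*ti^4 + q^5*t^27*ti^5 + q^5*t^28*ti^6 + q^5*t^29*ti^7) * ht
  have f52 : q^5*t^30*ti^12 = q^5*t^18 := by linear_combination (q^5*t^18 + q^5*t^19*ti + q^5*t^20*ti^2 + q^5*t^21*ti^3 + q^5*t^22*ti^4 + q^5*t^23*ti^5 + q^5*t^24*ti^6 + q^5*t^25*ti^7 + q^5*t^26*ti^8 + q^5*t^27*ti^9 + q^5*t^28*ti^10 + q^5*t^29*ti^11) * ht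
  have f53 : q^5*t^32*ti^8 = q^5*t^24 := by linear_combination (q^5*t^24 + q^5*t^25*ti + q^5*t^26*ti^2 + q^5*t^27*ti^3 + q^5*t^28*ti^4 + q^5*t^29*ti^5 + q^5*t^30*ti^6 + q^5*t^31*ti^7) * ht
  have f54 : q^5*t^33*ti^8 = q^5*t^25 := by linear_combination (q^5*t^25 + q^5*t^26*ti + q^5*t^27*ti^2 + q^5*t^28*ti^3 + q^5*t^29*ti^4 + q^5*t^30*ti^5 + q^5*t^31*ti^6 + q^5*t^32*ti^7) * ht
  have f55 : q^5*t^33*ti^12 = q^5*t^21 := by linear_combination (q^5*t^21 + q^5*t^22*ti + q^5*t^23*ti^2 + q^5*t^24*ti^3 + q^5*t^25*ti^4 + q^5*t^26*ti^5 + q^5*t^27*ti^6 + q^5*t^28*ti^7 + q^5*t^29*ti^8 + q^5*t^30*ti^9 + q^5*t^31*ti^10 + q^5*t^32*ti^11) * ht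
  have f56 : q^5*t^34*ti^12 = q^5*t^22 := by linear_combination (q^5*t^22 + q^5*t^23*ti + q^5*t^24*ti^2 + q^5*t^25*ti^3 + q^5*t^26*ti^4 + q^5*t^27*ti^5 + q^5*t^28*ti^6 + q^5*t^29*ti^7 + q^5*t^30*ti^8 + q^5*t^31*ti^9 + q^5*t^32*ti^10 + q^5*t^33*ti^11) * ht
  have f57 : q^5*t^37*ti^12 = q^5*t^25 := by linear_combination (q^5*t^25 + q^5*t^26*ti + q^5*t^27*ti^2 + q^5*t^28*ti^3 + q^5*t^29*ti^4 + q^5*t^30*ti^5 + q^5*t^31*ti^6 + q^5*t^32*ti^7 + q^5*t^33*ti^8 + q^5*t^34*ti^9 + q^5*t^35*ti^10 + q^5*t^36*ti^11) * ht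
  have f58 : q^6*t^25*ti^4 = q^6*t^21 := by linear_combination (q^6*t^21 + q^6*t^22*ti + q^6*t^23*ti^2 + q^6*t^24*ti^3) * ht
  have f59 : q^6*t^28*ti^4 = q^6*t^24 := by linear_combination (q^6*t^24 + q^6*t^25*ti + q^6*t^26*ti^2 + q^6*t^27*ti^3) * ht
  have f60 : q^6*t^29*ti^4 = q^6*t^25 := by linear_combination (q^6*t^25 + q^6*t^26*ti + q^6*t^27*ti^2 + q^6*t^28*ti^3) * ht
  have f61 : q^6*t^29*ti^8 = q^6*t^21 := by linear_combination (q^6*t^21 + q^6*t^22*ti + q^6*t^23*ti^2 + q^6*t^24*ti^3 + q^6*t^25*ti^4 + q^6*t^26*ti^5 + q^6*t^27*ti^6 + q^6*t^28*ti^7) * ht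
  have f62 : q^6*t^30*ti^8 = q^6*t^22 := by linear_combination (q^6*t^22 + q^6*t^23*ti + q^6*t^24*ti^2 + q^6*t^25*ti^3 + q^6*t^26*ti^4 + q^6*t^27*ti^5 + q^6*t^28*ti^6 + q^6*t^29*ti^7) * ht
  have f63 : q^6*t^32*ti^4 = q^6*t^28 := by linear_combination (q^6*t^28 + q^6*t^29*ti + q^6*t^30*ti^2 + q^6*t^31*ti^3) * ht
  have f64 : q^6*t^33*ti^8 = q^6*t^25 := by linear_combination (q^6*t^25 + q^6*t^26*ti + q^6*t^27*ti^2 + q^6*t^28*ti^3 + q^6*t^29*ti^4 + q^6*t^30*ti^5 + q^6*t^31*ti^6 + q^6*t^32*ti^7) * ht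
  have f65 : q^6*t^34*ti^12 = q^6*t^22 := by linear_combination (q^6*t^22 + q^6*t^23*ti + q^6*t^24*ti^2 + q^6*t^25*ti^3 + q^6*t^26*ti^4 + q^6*t^27*ti^5 + q^6*t^28*ti^6 + q^6*t^29*ti^7 + q^6*t^30*ti^8 + q^6*t^31*ti^9 + q^6*t^32*ti^10 + q^6*t^33*ti^11) * ht
  have f66 : q^6*t^36*ti^8 = q^6*t^28 := by linear_combination (q^6*t^28 + q^6*t^29*ti + q^6*t^30*ti^2 + q^6*t^31*ti^3 + q^6*t^32*ti^4 + q^6*t^33*ti^5 + q^6*t^34*ti^6 + q^6*t^35*ti^7) * ht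
  have f67 : q^6*t^37*ti^8 = q^6*t^29 := by linear_combination (q^6*t^29 + q^6*t^30*ti + q^6*t^31*ti^2 + q^6*t^32*ti^3 + q^6*t^33*ti^4 + q^6*t^34*ti^5 + q^6*t^35*ti^6 + q^6*t^36*ti^7) * ht
  have f68 : q^6*t^37*ti^12 = q^6*t^25 := by linear_combination (q^6*t^25 + q^6*t^26*ti + q^6*t^27*ti^2 + q^6*t^28*ti^3 + q^6*t^29*ti^4 + q^6*t^30*ti^5 + q^6*t^31*ti^6 + q^6*t^32*ti^7 + q^6*t^33*ti^8 + q^6*t^34*ti^9 + q^6*t^35*ti^10 + q^6*t^36*ti^11) * ht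
  have f69 : q^6*t^38*ti^12 = q^6*t^26 := by linear_combination (q^6*t^26 + q^6*t^27*ti + q^6*t^28*ti^2 + q^6*t^29*ti^3 + q^6*t^30*ti^4 + q^6*t^31*ti^5 + q^6*t^32*ti^6 + q^6*t^33*ti^7 + q^6*t^34*ti^8 + q^6*t^35*ti^9 + q^6*t^36*ti^10 + q^6*t^37*ti^11) * ht
  have f70 : q^6*t^41*ti^12 = q^6*t^29 := by linear_combination (q^6*t^29 + q^6*t^30*ti + q^6*t^31*ti^2 + q^6*t^32*ti^3 + q^6*t^33*ti^4 + q^6*t^34*ti^5 + q^6*t^35*ti^6 + q^6*t^36*ti^7 + q^6*t^37*ti^8 + q^6*t^38*ti^9 + q^6*t^39*ti^10 + q^6*t^40*ti^11) * ht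
  have f71 : q^6*t^42*ti^16 = q^6*t^26 := by linear_combination (q^6*t^26 + q^6*t^27*ti + q^6*t^28*ti^2 + q^6*t^29*ti^3 + q^6*t^30*ti^4 + q^6*t^31*ti^5 + q^6*t^32*ti^6 + q^6*t^33*ti^7 + q^6*t^34*ti^8 + q^6*t^35*ti^9 + q^6*t^36*ti^10 + q^6*t^37*ti^11 + q^6*t^38*ti^12 + q^6*t^39*ti^13 + q^6*t^40*ti^14 + q^6*t^41*ti^15) * ht
  simp only [HD43, JDD5_43]
  linear_combination (-1) * f0 + (-1) * f1 + (-1) * f2 + (-1) * f3 + (-1) * f4 + (-2) * f5 + (-1) * f6 + f7 + (-1) * f8 + (-1) * f9 + (-3) * f10 + (-2) * f11 + (-2) * f12 + (-2) * f13 + f14 + (-1) * f15 + 2 * f16 + f17 + f18 + f19 + (-1) * f20 + (-1) * f21 + (-1) * f22 + (-1) * f23 + (-3) * f24 + (-2) * f25 + (-2) * f26 + (-2) * f27 + f28 + 2 * f29 + f30 + (-1) * f31 + 3 * f32 + f33 + f34 + f35 + (-1) * f36 + (-1) * f37 + (-1) * f38 + (-1) * f39 + (-1) * f40 + (-3) *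 f41 + (-1) * f42 + f43 + (-2) * f44 + (-2) * f45 + 2 * f46 + 2 * f47 + (-1) * f48 + f49 + 3 * f50 + f51 + (-1) * f52 + f53 + f54 + (-1) * f55 + (-1) * f56 + (-1) * f57 + (-1) * f58 + (-1) * f59 + (-1) * f60 + f61 + f62 + (-1) * f63 + 2 * f64 + (-1) * f65 + f66 + f67 + (-1) * f68 + (-1) * f69 + (-1) * f70 + f71

lemma key3 {R : Type*} [CommRing R] (q t qi ti : R) (hq : q*qi=1) (ht : t*ti=1) :
    HD43 q t (-(ti^5)) = 1 + q*t + q^2*t + q^2*t^2 + q^3*t^3 + q^3*t^14 - q*t^7 - q^2*t^7 - q^2*t^8 - q^3*t^8 - q^3*t^9 := by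
  have f0 : q*t^9*ti^5 = q*t^4 := by linear_combination (q*t^4 + q*t^5*ti + q*t^6*ti^2 + q*t^7*ti^3 + q*t^8*ti^4) * ht
  have f1 : q*t^12*ti^5 = q*t^7 := by linear_combination (q*t^7 + q*t^8*ti + q*t^9*ti^2 + q*t^10*ti^3 + q*t^11*ti^4) * ht
  have f2 : q^2*t^9*ti^5 = q^2*t^4 := by linear_combination (q^2*t^4 + q^2*t^5*ti + q^2*t^6*ti^2 + q^2*t^7*ti^3 + q^2*t^8*ti^4) * ht
  have f3 : q^2*t^10*ti^5 = q^2*t^5 := by linear_combination (q^2*t^5 + q^2*t^6*ti + q^2*t^7*ti^2 + q^2*t^8*ti^3 + q^2*t^9*ti^4) * ht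
  have f4 : q^2*t^12*ti^5 = q^2*t^7 := by linear_combination (q^2*t^7 + q^2*t^8*ti + q^2*t^9*ti^2 + q^2*t^10*ti^3 + q^2*t^11*ti^4) * ht
  have f5 : q^2*t^13*ti^5 = q^2*t^8 := by linear_combination (q^2*t^8 + q^2*t^9*ti + q^2*t^10*ti^2 + q^2*t^11*ti^3 + q^2*t^12*ti^4) * ht
  have f6 : q^2*t^16*ti^5 = q^2*t^11 := by linear_combination (q^2*t^11 + q^2*t^12*ti + q^2*t^13*ti^2 + q^2*t^14*ti^3 + q^2*t^15*ti^4) * ht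
  have f7 : q^2*t^21*ti^10 = q^2*t^11 := by linear_combination (q^2*t^11 + q^2*t^12*ti + q^2*t^13*ti^2 + q^2*t^14*ti^3 + q^2*t^15*ti^4 + q^2*t^16*ti^5 + q^2*t^17*ti^6 + q^2*t^18*ti^7 + q^2*t^19*ti^8 + q^2*t^20*ti^9) * ht
  have f8 : q^3*t^10*ti^5 = q^3*t^5 := by linear_combination (q^3*t^5 + q^3*t^6*ti + q^3*t^7*ti^2 + q^3*t^8*ti^3 + q^3*t^9*ti^4) * ht
  have f9 : q^3*t^11*ti^5 = q^3*t^6 := by linear_combination (q^3*t^6 + q^3*t^7*ti + q^3*t^8*ti^2 + q^3*t^9*ti^3 + q^3*t^10*ti^4) * ht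
  have f10 : q^3*t^13*ti^5 = q^3*t^8 := by linear_combination (q^3*t^8 + q^3*t^9*ti + q^3*t^10*ti^2 + q^3*t^11*ti^3 + q^3*t^12*ti^4) * ht
  have f11 : q^3*t^14*ti^5 = q^3*t^9 := by linear_combination (q^3*t^9 + q^3*t^10*ti + q^3*t^11*ti^2 + q^3*t^12*ti^3 + q^3*t^13*ti^4) * ht
  have f12 : q^3*t^16*ti^5 = q^3*t^11 := by linear_combination (q^3*t^11 + q^3*t^12*ti + q^3*t^13*ti^2 + q^3*t^14*ti^3 + q^3*t^15*ti^4) * ht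
  have f13 : q^3*t^17*ti^5 = q^3*t^12 := by linear_combination (q^3*t^12 + q^3*t^13*ti + q^3*t^14*ti^2 + q^3*t^15*ti^3 + q^3*t^16*ti^4) * ht
  have f14 : q^3*t^18*ti^10 = q^3*t^8 := by linear_combination (q^3*t^8 + q^3*t^9*ti + q^3*t^10*ti^2 + q^3*t^11*ti^3 + q^3*t^12*ti^4 + q^3*t^13*ti^5 + q^3*t^14*ti^6 + q^3*t^15*ti^7 + q^3*t^16*ti^8 + q^3*t^17*ti^9) * ht
  have f15 : q^3*t^20*ti^5 = q^3*t^15 := by linear_combination (q^3*t^15 + q^3*t^16*ti + q^3*t^17*ti^2 + q^3*t^18*ti^3 + q^3*t^19*ti^4) * ht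
  have f16 : q^3*t^21*ti^10 = q^3*t^11 := by linear_combination (q^3*t^11 + q^3*t^12*ti + q^3*t^13*ti^2 + q^3*t^14*ti^3 + q^3*t^15*ti^4 + q^3*t^16*ti^5 + q^3*t^17*ti^6 + q^3*t^18*ti^7 + q^3*t^19*ti^8 + q^3*t^20*ti^9) * ht
  have f17 : q^3*t^22*ti^10 = q^3*t^12 := by linear_combination (q^3*t^12 + q^3*t^13*ti + q^3*t^14*ti^2 + q^3*t^15*ti^3 + q^3*t^16*ti^4 + q^3*t^17*ti^5 + q^3*t^18*ti^6 + q^3*t^19*ti^7 + q^3*t^20*ti^8 + q^3*t^21*ti^9) * ht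
  have f18 : q^3*t^24*ti^10 = q^3*t^14 := by linear_combination (q^3*t^14 + q^3*t^15*ti + q^3*t^16*ti^2 + q^3*t^17*ti^3 + q^3*t^18*ti^4 + q^3*t^19*ti^5 + q^3*t^20*ti^6 + q^3*t^21*ti^7 + q^3*t^22*ti^8 + q^3*t^23*ti^9) * ht
  have f19 : q^3*t^25*ti^10 = q^3*t^15 := by linear_combination (q^3*t^15 + q^3*t^16*ti + q^3*t^17*ti^2 + q^3*t^18*ti^3 + q^3*t^19*ti^4 + q^3*t^20*ti^5 + q^3*t^21*ti^6 + q^3*t^22*ti^7 + q^3*t^23*ti^8 + q^3*t^24*ti^9) * ht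
  have f20 : q^4*t^13*ti^5 = q^4*t^8 := by linear_combination (q^4*t^8 + q^4*t^9*ti + q^4*t^10*ti^2 + q^4*t^11*ti^3 + q^4*t^12*ti^4) * ht
  have f21 : q^4*t^14*ti^5 = q^4*t^9 := by linear_combination (q^4*t^9 + q^4*t^10*ti + q^4*t^11*ti^2 + q^4*t^12*ti^3 + q^4*t^13*ti^4) * ht
  have f22 : q^4*t^15*ti^5 = q^4*t^10 := by linear_combination (q^4*t^10 + q^4*t^11*ti + q^4*t^12*ti^2 + q^4*t^13*ti^3 + q^4*t^14*ti^4) * ht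
  have f23 : q^4*t^16*ti^5 = q^4*t^11 := by linear_combination (q^4*t^11 + q^4*t^12*ti + q^4*t^13*ti^2 + q^4*t^14*ti^3 + q^4*t^15*ti^4) * ht
  have f24 : q^4*t^17*ti^5 = q^4*t^12 := by linear_combination (q^4*t^12 + q^4*t^13*ti + q^4*t^14*ti^2 + q^4*t^15*ti^3 + q^4*t^16*ti^4) * ht
  have f25 : q^4*t^18*ti^5 = q^4*t^13 := by linear_combination (q^4*t^13 + q^4*t^14*ti + q^4*t^15*ti^2 + q^4*t^16*ti^3 + q^4*t^17*ti^4) * ht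
  have f26 : q^4*t^20*ti^5 = q^4*t^15 := by linear_combination (q^4*t^15 + q^4*t^16*ti + q^4*t^17*ti^2 + q^4*t^18*ti^3 + q^4*t^19*ti^4) * ht
  have f27 : q^4*t^21*ti^5 = q^4*t^16 := by linear_combination (q^4*t^16 + q^4*t^17*ti + q^4*t^18*ti^2 + q^4*t^19*ti^3 + q^4*t^20*ti^4) * ht
  have f28 : q^4*t^21*ti^10 = q^4*t^11 := by linear_combination (q^4*t^11 + q^4*t^12*ti + q^4*t^13*ti^2 + q^4*t^14*ti^3 + q^4*t^15*ti^4 + q^4*t^16*ti^5 + q^4*t^17*ti^6 + q^4*t^18*ti^7 + q^4*t^19*ti^8 + q^4*t^20*ti^9) * ht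
  have f29 : q^4*t^22*ti^10 = q^4*t^12 := by linear_combination (q^4*t^12 + q^4*t^13*ti + q^4*t^14*ti^2 + q^4*t^15*ti^3 + q^4*t^16*ti^4 + q^4*t^17*ti^5 + q^4*t^18*ti^6 + q^4*t^19*ti^7 + q^4*t^20*ti^8 + q^4*t^21*ti^9) * ht
  have f30 : q^4*t^23*ti^10 = q^4*t^13 := by linear_combination (q^4*t^13 + q^4*t^14*ti + q^4*t^15*ti^2 + q^4*t^16*ti^3 + q^4*t^17*ti^4 + q^4*t^18*ti^5 + q^4*t^19*ti^6 + q^4*t^20*ti^7 + q^4*t^21*ti^8 + q^4*t^22*ti^9) * ht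
  have f31 : q^4*t^24*ti^5 = q^4*t^19 := by linear_combination (q^4*t^19 + q^4*t^20*ti + q^4*t^21*ti^2 + q^4*t^22*ti^3 + q^4*t^23*ti^4) * ht
  have f32 : q^4*t^25*ti^10 = q^4*t^15 := by linear_combination (q^4*t^15 + q^4*t^16*ti + q^4*t^17*ti^2 + q^4*t^18*ti^3 + q^4*t^19*ti^4 + q^4*t^20*ti^5 + q^4*t^21*ti^6 + q^4*t^22*ti^7 + q^4*t^23*ti^8 + q^4*t^24*ti^9) * ht
  have f33 : q^4*t^26*ti^10 = q^4*t^16 := by linear_combination (q^4*t^16 + q^4*t^17*ti + q^4*t^18*ti^2 + q^4*t^19*ti^3 + q^4*t^20*ti^4 + q^4*t^21*ti^5 + q^4*t^22*ti^6 + q^4*t^23*ti^7 + q^4*t^24*ti^8 + q^4*t^25*ti^9) * ht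
  have f34 : q^4*t^28*ti^10 = q^4*t^18 := by linear_combination (q^4*t^18 + q^4*t^19*ti + q^4*t^20*ti^2 + q^4*t^21*ti^3 + q^4*t^22*ti^4 + q^4*t^23*ti^5 + q^4*t^24*ti^6 + q^4*t^25*ti^7 + q^4*t^26*ti^8 + q^4*t^27*ti^9) * ht
  have f35 : q^4*t^29*ti^10 = q^4*t^19 := by linear_combination (q^4*t^19 + q^4*t^20*ti + q^4*t^21*ti^2 + q^4*t^22*ti^3 + q^4*t^23*ti^4 + q^4*t^24*ti^5 + q^4*t^25*ti^6 + q^4*t^26*ti^7 + q^4*t^27*ti^8 + q^4*t^28*ti^9) * ht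
  have f36 : q^4*t^30*ti^15 = q^4*t^15 := by linear_combination (q^4*t^15 + q^4*t^16*ti + q^4*t^17*ti^2 + q^4*t^18*ti^3 + q^4*t^19*ti^4 + q^4*t^20*ti^5 + q^4*t^21*ti^6 + q^4*t^22*ti^7 + q^4*t^23*ti^8 + q^4*t^24*ti^9 + q^4*t^25*ti^10 + q^4*t^26*ti^11 + q^4*t^27*ti^12 + q^4*t^28*ti^13 + q^4*t^29*ti^14) * ht
  have f37 : q^4*t^33*ti^15 = q^4*t^18 := by linear_combination (q^4*t^18 + q^4*t^19*ti + q^4*t^20*ti^2 + q^4*t^21*ti^3 + q^4*t^22*ti^4 + q^4*t^23*ti^5 + q^4*t^24*ti^6 + q^4*t^25*ti^7 + q^4*t^26*ti^8 + q^4*t^27*ti^9 + q^4*t^28*ti^10 + q^4*t^29*ti^11 + q^4*t^30*ti^12 + q^4*t^31*ti^13 + q^4*t^32*ti^14) * ht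
  have f38 : q^5*t^17*ti^5 = q^5*t^12 := by linear_combination (q^5*t^12 + q^5*t^13*ti + q^5*t^14*ti^2 + q^5*t^15*ti^3 + q^5*t^16*ti^4) * ht
  have f39 : q^5*t^18*ti^5 = q^5*t^13 := by linear_combination (q^5*t^13 + q^5*t^14*ti + q^5*t^15*ti^2 + q^5*t^16*ti^3 + q^5*t^17*ti^4) * ht
  have f40 : q^5*t^20*ti^5 = q^5*t^15 := by linear_combination (q^5*t^15 + q^5*t^16*ti + q^5*t^17*ti^2 + q^5*t^18*ti^3 + q^5*t^19*ti^4) * ht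
  have f41 : q^5*t^21*ti^5 = q^5*t^16 := by linear_combination (q^5*t^16 + q^5*t^17*ti + q^5*t^18*ti^2 + q^5*t^19*ti^3 + q^5*t^20*ti^4) * ht
  have f42 : q^5*t^22*ti^5 = q^5*t^17 := by linear_combination (q^5*t^17 + q^5*t^18*ti + q^5*t^19*ti^2 + q^5*t^20*ti^3 + q^5*t^21*ti^4) * ht
  have f43 : q^5*t^22*ti^10 = q^5*t^12 := by linear_combination (q^5*t^12 + q^5*t^13*ti + q^5*t^14*ti^2 + q^5*t^15*ti^3 + q^5*t^16*ti^4 + q^5*t^17*ti^5 + q^5*t^18*ti^6 + q^5*t^19*ti^7 + q^5*t^20*ti^8 + q^5*t^21*ti^9) * ht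
  have f44 : q^5*t^24*ti^5 = q^5*t^19 := by linear_combination (q^5*t^19 + q^5*t^20*ti + q^5*t^21*ti^2 + q^5*t^22*ti^3 + q^5*t^23*ti^4) * ht
  have f45 : q^5*t^25*ti^5 = q^5*t^20 := by linear_combination (q^5*t^20 + q^5*t^21*ti + q^5*t^22*ti^2 + q^5*t^23*ti^3 + q^5*t^24*ti^4) * ht
  have f46 : q^5*t^25*ti^10 = q^5*t^15 := by linear_combination (q^5*t^15 + q^5*t^16*ti + q^5*t^17*ti^2 + q^5*t^18*ti^3 + q^5*t^19*ti^4 + q^5*t^20*ti^5 + q^5*t^21*ti^6 + q^5*t^22*ti^7 + q^5*t^23*ti^8 + q^5*t^24*ti^9) * ht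
  have f47 : q^5*t^26*ti^10 = q^5*t^16 := by linear_combination (q^5*t^16 + q^5*t^17*ti + q^5*t^18*ti^2 + q^5*t^19*ti^3 + q^5*t^20*ti^4 + q^5*t^21*ti^5 + q^5*t^22*ti^6 + q^5*t^23*ti^7 + q^5*t^24*ti^8 + q^5*t^25*ti^9) * ht
  have f48 : q^5*t^28*ti^5 = q^5*t^23 := by linear_combination (q^5*t^23 + q^5*t^24*ti + q^5*t^25*ti^2 + q^5*t^26*ti^3 + q^5*t^27*ti^4) * ht
  have f49 : q^5*t^28*ti^10 = q^5*t^18 := by linear_combination (q^5*t^18 + q^5*t^19*ti + q^5*t^20*ti^2 + q^5*t^21*ti^3 + q^5*t^22*ti^4 + q^5*t^23*ti^5 + q^5*t^24*ti^6 + q^5*t^25*ti^7 + q^5*t^26*ti^8 + q^5*t^27*ti^9) * ht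
  have f50 : q^5*t^29*ti^10 = q^5*t^19 := by linear_combination (q^5*t^19 + q^5*t^20*ti + q^5*t^21*ti^2 + q^5*t^22*ti^3 + q^5*t^23*ti^4 + q^5*t^24*ti^5 + q^5*t^25*ti^6 + q^5*t^26*ti^7 + q^5*t^27*ti^8 + q^5*t^28*ti^9) * ht
  have f51 : q^5*t^30*ti^10 = q^5*t^20 := by linear_combination (q^5*t^20 + q^5*t^21*ti + q^5*t^22*ti^2 + q^5*t^23*ti^3 + q^5*t^24*ti^4 + q^5*t^25*ti^5 + q^5*t^26*ti^6 + q^5*t^27*ti^7 + q^5*t^28*ti^8 + q^5*t^29*ti^9) * ht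
  have f52 : q^5*t^30*ti^15 = q^5*t^15 := by linear_combination (q^5*t^15 + q^5*t^16*ti + q^5*t^17*ti^2 + q^5*t^18*ti^3 + q^5*t^19*ti^4 + q^5*t^20*ti^5 + q^5*t^21*ti^6 + q^5*t^22*ti^7 + q^5*t^23*ti^8 + q^5*t^24*ti^9 + q^5*t^25*ti^10 + q^5*t^26*ti^11 + q^5*t^27*ti^12 + q^5*t^28*ti^13 + q^5*t^29*ti^14) * ht
  have f53 : q^5*t^32*ti^10 = q^5*t^22 := by linear_combination (q^5*t^22 + q^5*t^23*ti + q^5*t^24*ti^2 + q^5*t^25*ti^3 + q^5*t^26*ti^4 + q^5*t^27*ti^5 + q^5*t^28*ti^6 + q^5*t^29*ti^7 + q^5*t^30*ti^8 + q^5*t^31*ti^9) * ht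
  have f54 : q^5*t^33*ti^10 = q^5*t^23 := by linear_combination (q^5*t^23 + q^5*t^24*ti + q^5*t^25*ti^2 + q^5*t^26*ti^3 + q^5*t^27*ti^4 + q^5*t^28*ti^5 + q^5*t^29*ti^6 + q^5*t^30*ti^7 + q^5*t^31*ti^8 + q^5*t^32*ti^9) * ht
  have f55 : q^5*t^33*ti^15 = q^5*t^18 := by linear_combination (q^5*t^18 + q^5*t^19*ti + q^5*t^20*ti^2 + q^5*t^21*ti^3 + q^5*t^22*ti^4 + q^5*t^23*ti^5 + q^5*t^24*ti^6 + q^5*t^25*ti^7 + q^5*t^26*ti^8 + q^5*t^27*ti^9 + q^5*t^28*ti^10 + q^5*t^29*ti^11 + q^5*t^30*ti^12 + q^5*t^31*ti^13 + q^5*t^32*ti^14) * ht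
  have f56 : q^5*t^34*ti^15 = q^5*t^19 := by linear_combination (q^5*t^19 + q^5*t^20*ti + q^5*t^21*ti^2 + q^5*t^22*ti^3 + q^5*t^23*ti^4 + q^5*t^24*ti^5 + q^5*t^25*ti^6 + q^5*t^26*ti^7 + q^5*t^27*ti^8 + q^5*t^28*ti^9 + q^5*t^29*ti^10 + q^5*t^30*ti^11 + q^5*t^31*ti^12 + q^5*t^32*ti^13 + q^5*t^33*ti^14) * ht
  have f57 : q^5*t^37*ti^15 = q^5*t^22 := by linear_combination (q^5*t^22 + q^5*t^23*ti + q^5*t^24*ti^2 + q^5*t^25*ti^3 + q^5*t^26*ti^4 + q^5*t^27*ti^5 + q^5*t^28*ti^6 + q^5*t^29*ti^7 + q^5*t^30*ti^8 + q^5*t^31*ti^9 + q^5*t^32*ti^10 + q^5*t^33*ti^11 + q^5*t^34*ti^12 + q^5*t^35*ti^13 + q^5*t^36*ti^14) * ht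
  have f58 : q^6*t^25*ti^5 = q^6*t^20 := by linear_combination (q^6*t^20 + q^6*t^21*ti + q^6*t^22*ti^2 + q^6*t^23*ti^3 + q^6*t^24*ti^4) * ht
  have f59 : q^6*t^28*ti^5 = q^6*t^23 := by linear_combination (q^6*t^23 + q^6*t^24*ti + q^6*t^25*ti^2 + q^6*t^26*ti^3 + q^6*t^27*ti^4) * ht
  have f60 : q^6*t^29*ti^5 = q^6*t^24 := by linear_combination (q^6*t^24 + q^6*t^25*ti + q^6*t^26*ti^2 + q^6*t^27*ti^3 + q^6*t^28*ti^4) * ht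
  have f61 : q^6*t^29*ti^10 = q^6*t^19 := by linear_combination (q^6*t^19 + q^6*t^20*ti + q^6*t^21*ti^2 + q^6*t^22*ti^3 + q^6*t^23*ti^4 + q^6*t^24*ti^5 + q^6*t^25*ti^6 + q^6*t^26*ti^7 + q^6*t^27*ti^8 + q^6*t^28*ti^9) * ht
  have f62 : q^6*t^30*ti^10 = q^6*t^20 := by linear_combination (q^6*t^20 + q^6*t^21*ti + q^6*t^22*ti^2 + q^6*t^23*ti^3 + q^6*t^24*ti^4 + q^6*t^25*ti^5 + q^6*t^26*ti^6 + q^6*t^27*ti^7 + q^6*t^28*ti^8 + q^6*t^29*ti^9) * ht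
  have f63 : q^6*t^32*ti^5 = q^6*t^27 := by linear_combination (q^6*t^27 + q^6*t^28*ti + q^6*t^29*ti^2 + q^6*t^30*ti^3 + q^6*t^31*ti^4) * ht
  have f64 : q^6*t^33*ti^10 = q^6*t^23 := by linear_combination (q^6*t^23 + q^6*t^24*ti + q^6*t^25*ti^2 + q^6*t^26*ti^3 + q^6*t^27*ti^4 + q^6*t^28*ti^5 + q^6*t^29*ti^6 + q^6*t^30*ti^7 + q^6*t^31*ti^8 + q^6*t^32*ti^9) * ht
  have f65 : q^6*t^34*ti^15 = q^6*t^19 := by linear_combination (q^6*t^19 + q^6*t^20*ti + q^6*t^21*ti^2 + q^6*t^22*ti^3 + q^6*t^23*ti^4 + q^6*t^24*ti^5 + q^6*t^25*ti^6 + q^6*t^26*ti^7 + q^6*t^27*ti^8 + q^6*t^28*ti^9 + q^6*t^29*ti^10 + q^6*t^30*ti^11 + q^6*t^31*ti^12 + q^6*t^32*ti^13 + q^6*t^33*ti^14) * ht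
  have f66 : q^6*t^36*ti^10 = q^6*t^26 := by linear_combination (q^6*t^26 + q^6*t^27*ti + q^6*t^28*ti^2 + q^6*t^29*ti^3 + q^6*t^30*ti^4 + q^6*t^31*ti^5 + q^6*t^32*ti^6 + q^6*t^33*ti^7 + q^6*t^34*ti^8 + q^6*t^35*ti^9) * ht
  have f67 : q^6*t^37*ti^10 = q^6*t^27 := by linear_combination (q^6*t^27 + q^6*t^28*ti + q^6*t^29*ti^2 + q^6*t^30*ti^3 + q^6*t^31*ti^4 + q^6*t^32*ti^5 + q^6*t^33*ti^6 + q^6*t^34*ti^7 + q^6*t^35*ti^8 + q^6*t^36*ti^9) * ht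
  have f68 : q^6*t^37*ti^15 = q^6*t^22 := by linear_combination (q^6*t^22 + q^6*t^23*ti + q^6*t^24*ti^2 + q^6*t^25*ti^3 + q^6*t^26*ti^4 + q^6*t^27*ti^5 + q^6*t^28*ti^6 + q^6*t^29*ti^7 + q^6*t^30*ti^8 + q^6*t^31*ti^9 + q^6*t^32*ti^10 + q^6*t^33*ti^11 + q^6*t^34*ti^12 + q^6*t^35*ti^13 + q^6*t^36*ti^14) * ht
  have f69 : q^6*t^38*ti^15 = q^6*t^23 := by linear_combination (q^6*t^23 + q^6*t^24*ti + q^6*t^25*ti^2 + q^6*t^26*ti^3 + q^6*t^27*ti^4 + q^6*t^28*ti^5 + q^6*t^29*ti^6 + q^6*t^30*ti^7 + q^6*t^31*ti^8 + q^6*t^32*ti^9 + q^6*t^33*ti^10 + q^6*t^34*ti^11 + q^6*t^35*ti^12 + q^6*t^36*ti^13 + q^6*t^37*ti^14) * ht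
  have f70 : q^6*t^41*ti^15 = q^6*t^26 := by linear_combination (q^6*t^26 + q^6*t^27*ti + q^6*t^28*ti^2 + q^6*t^29*ti^3 + q^6*t^30*ti^4 + q^6*t^31*ti^5 + q^6*t^32*ti^6 + q^6*t^33*ti^7 + q^6*t^34*ti^8 + q^6*t^35*ti^9 + q^6*t^36*ti^10 + q^6*t^37*ti^11 + q^6*t^38*ti^12 + q^6*t^39*ti^13 + q^6*t^40*ti^14) * ht
  have f71 : q^6*t^42*ti^20 = q^6*t^22 := by linear_combination (q^6*t^22 + q^6*t^23*ti + q^6*t^24*ti^2 + q^6*t^25*ti^3 + q^6*t^26*ti^4 + q^6*t^27*ti^5 + q^6*t^28*ti^6 + q^6*t^29*ti^7 + q^6*t^30*ti^8 + q^6*t^31*ti^9 + q^6*t^32*ti^10 + q^6*t^33*ti^11 + q^6*t^34*ti^12 + q^6*t^35*ti^13 + q^6*t^36*ti^14 + q^6*t^37*ti^15 + q^6*t^38*ti^16 + q^6*t^39*ti^17 + q^6*t^40*ti^18 + q^6*t^41*ti^19) * ht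
  simp only [HD43]
  linear_combination (-1) * f0 + (-1) * f1 + (-1) * f2 + (-1) * f3 + (-1) * f4 + (-2) * f5 + (-1) * f6 + f7 + (-1) * f8 + (-1) * f9 + (-3) * f10 + (-2) * f11 + (-2) * f12 + (-2) * f13 + f14 + (-1) * f15 + 2 * f16 + f17 + f18 + f19 + (-1) * f20 + (-1) * f21 + (-1) * f22 + (-1) * f23 + (-3) * f24 + (-2) * f25 + (-2) * f26 + (-2) * f27 + f28 + 2 * f29 + f30 + (-1) * f31 + 3 * f32 + f33 + f34 + f35 + (-1) * f36 + (-1) * f37 + (-1) * f38 + (-1) * f39 + (-1) * f40 + (-3) * f41 + (-1) * f42 + f43 + (-2) * f44 + (-2) * f45 + 2 * f46 + 2 * f47 + (-1) * f48 + f49 + 3 * f50 + f51 + (-1) * f52 + f53 + f54 + (-1) * f55 + (-1) * f56 + (-1) * f57 + (-1) * f58 + (-1) * f59 + (-1) * f60 + f61 + f62 + (-1) * f63 + 2 * f64 + (-1) * f65 + f66 + f67 + (-1) * f68 + (-1) * f69 + (-1) * f70 + f71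

lemma key4 {R : Type*} [CommRing R] (q t qi ti : R) (hq : q*qi=1) (ht : t*ti=1) :
    HD43 q t (-(ti^8)) = 1 := by
  have f0 : q*t^9*ti^8 = q*t := by linear_combination (q*t + q*t^2*ti + q*t^3*ti^2 + q*t^4*ti^3 + q*t^5*ti^4 + q*t^6*ti^5 + q*t^7*ti^6 + q*t^8*ti^7) * ht
  have f1 : q*t^12*ti^8 = q*t^4 := by linear_combination (q*t^4 + q*t^5*ti + q*t^6*ti^2 + q*t^7*ti^3 + q*t^8*ti^4 + q*t^9*ti^5 + q*t^10*ti^6 + q*t^11*ti^7) * ht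
  have f2 : q^2*t^9*ti^8 = q^2*t := by linear_combination (q^2*t + q^2*t^2*ti + q^2*t^3*ti^2 + q^2*t^4*ti^3 + q^2*t^5*ti^4 + q^2*t^6*ti^5 + q^2*t^7*ti^6 + q^2*t^8*ti^7) * ht
  have f3 : q^2*t^10*ti^8 = q^2*t^2 := by linear_combination (q^2*t^2 + q^2*t^3*ti + q^2*t^4*ti^2 + q^2*t^5*ti^3 + q^2*t^6*ti^4 + q^2*t^7*ti^5 + q^2*t^8*ti^6 + q^2*t^9*ti^7) * ht
  have f4 : q^2*t^12*ti^8 = q^2*t^4 := by linear_combination (q^2*t^4 + q^2*t^5*ti + q^2*t^6*ti^2 + q^2*t^7*ti^3 + q^2*t^8*ti^4 + q^2*t^9*ti^5 + q^2*t^10*ti^6 + q^2*t^11*ti^7) * ht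
  have f5 : q^2*t^13*ti^8 = q^2*t^5 := by linear_combination (q^2*t^5 + q^2*t^6*ti + q^2*t^7*ti^2 + q^2*t^8*ti^3 + q^2*t^9*ti^4 + q^2*t^10*ti^5 + q^2*t^11*ti^6 + q^2*t^12*ti^7) * ht
  have f6 : q^2*t^16*ti^8 = q^2*t^8 := by linear_combination (q^2*t^8 + q^2*t^9*ti + q^2*t^10*ti^2 + q^2*t^11*ti^3 + q^2*t^12*ti^4 + q^2*t^13*ti^5 + q^2*t^14*ti^6 + q^2*t^15*ti^7) * ht
  have f7 : q^2*t^21*ti^16 = q^2*t^5 := by linear_combination (q^2*t^5 + q^2*t^6*ti + q^2*t^7*ti^2 + q^2*t^8*ti^3 + q^2*t^9*ti^4 + q^2*t^10*ti^5 + q^2*t^11*ti^6 + q^2*t^12*ti^7 + q^2*t^13*ti^8 + q^2*t^14*ti^9 + q^2*t^15*ti^10 + q^2*t^16*ti^11 + q^2*t^17*ti^12 + q^2*t^18*ti^13 + q^2*t^19*ti^14 + q^2*t^20*ti^15) * ht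
  have f8 : q^3*t^10*ti^8 = q^3*t^2 := by linear_combination (q^3*t^2 + q^3*t^3*ti + q^3*t^4*ti^2 + q^3*t^5*ti^3 + q^3*t^6*ti^4 + q^3*t^7*ti^5 + q^3*t^8*ti^6 + q^3*t^9*ti^7) * ht
  have f9 : q^3*t^11*ti^8 = q^3*t^3 := by linear_combination (q^3*t^3 + q^3*t^4*ti + q^3*t^5*ti^2 + q^3*t^6*ti^3 + q^3*t^7*ti^4 + q^3*t^8*ti^5 + q^3*t^9*ti^6 + q^3*t^10*ti^7) * ht
  have f10 : q^3*t^13*ti^8 = q^3*t^5 := by linear_combination (q^3*t^5 + q^3*t^6*ti + q^3*t^7*ti^2 + q^3*t^8*ti^3 + q^3*t^9*ti^4 + q^3*t^10*ti^5 + q^3*t^11*ti^6 + q^3*t^12*ti^7) * ht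
  have f11 : q^3*t^14*ti^8 = q^3*t^6 := by linear_combination (q^3*t^6 + q^3*t^7*ti + q^3*t^8*ti^2 + q^3*t^9*ti^3 + q^3*t^10*ti^4 + q^3*t^11*ti^5 + q^3*t^12*ti^6 + q^3*t^13*ti^7) * ht
  have f12 : q^3*t^16*ti^8 = q^3*t^8 := by linear_combination (q^3*t^8 + q^3*t^9*ti + q^3*t^10*ti^2 + q^3*t^11*ti^3 + q^3*t^12*ti^4 + q^3*t^13*ti^5 + q^3*t^14*ti^6 + q^3*t^15*ti^7) * ht
  have f13 : q^3*t^17*ti^8 = q^3*t^9 := by linear_combination (q^3*t^9 + q^3*t^10*ti + q^3*t^11*ti^2 + q^3*t^12*ti^3 + q^3*t^13*ti^4 + q^3*t^14*ti^5 + q^3*t^15*ti^6 + q^3*t^16*ti^7) * ht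
  have f14 : q^3*t^18*ti^16 = q^3*t^2 := by linear_combination (q^3*t^2 + q^3*t^3*ti + q^3*t^4*ti^2 + q^3*t^5*ti^3 + q^3*t^6*ti^4 + q^3*t^7*ti^5 + q^3*t^8*ti^6 + q^3*t^9*ti^7 + q^3*t^10*ti^8 + q^3*t^11*ti^9 + q^3*t^12*ti^10 + q^3*t^13*ti^11 + q^3*t^14*ti^12 + q^3*t^15*ti^13 + q^3*t^16*ti^14 + q^3*t^17*ti^15) * ht
  have f15 : q^3*t^20*ti^8 = q^3*t^12 := by linear_combination (q^3*t^12 + q^3*t^13*ti + q^3*t^14*ti^2 + q^3*t^15*ti^3 + q^3*t^16*ti^4 + q^3*t^17*ti^5 + q^3*t^18*ti^6 + q^3*t^19*ti^7) * ht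
  have f16 : q^3*t^21*ti^16 = q^3*t^5 := by linear_combination (q^3*t^5 + q^3*t^6*ti + q^3*t^7*ti^2 + q^3*t^8*ti^3 + q^3*t^9*ti^4 + q^3*t^10*ti^5 + q^3*t^11*ti^6 + q^3*t^12*ti^7 + q^3*t^13*ti^8 + q^3*t^14*ti^9 + q^3*t^15*ti^10 + q^3*t^16*ti^11 + q^3*t^17*ti^12 + q^3*t^18*ti^13 + q^3*t^19*ti^14 + q^3*t^20*ti^15) * ht
  have f17 : q^3*t^22*ti^16 = q^3*t^6 := by linear_combination (q^3*t^6 + q^3*t^7*ti + q^3*t^8*ti^2 + q^3*t^9*ti^3 + q^3*t^10*ti^4 + q^3*t^11*ti^5 + q^3*t^12*ti^6 + q^3*t^13*ti^7 + q^3*t^14*ti^8 + q^3*t^15*ti^9 + q^3*t^16*ti^10 + q^3*t^17*ti^11 + q^3*t^18*ti^12 + q^3*t^19*ti^13 + q^3*t^20*ti^14 + q^3*t^21*ti^15) * ht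
  have f18 : q^3*t^24*ti^16 = q^3*t^8 := by linear_combination (q^3*t^8 + q^3*t^9*ti + q^3*t^10*ti^2 + q^3*t^11*ti^3 + q^3*t^12*ti^4 + q^3*t^13*ti^5 + q^3*t^14*ti^6 + q^3*t^15*ti^7 + q^3*t^16*ti^8 + q^3*t^17*ti^9 + q^3*t^18*ti^10 + q^3*t^19*ti^11 + q^3*t^20*ti^12 + q^3*t^21*ti^13 + q^3*t^22*ti^14 + q^3*t^23*ti^15) * ht
  have f19 : q^3*t^25*ti^16 = q^3*t^9 := by linear_combination (q^3*t^9 + q^3*t^10*ti + q^3*t^11*ti^2 + q^3*t^12*ti^3 + q^3*t^13*ti^4 + q^3*t^14*ti^5 + q^3*t^15*ti^6 + q^3*t^16*ti^7 + q^3*t^17*ti^8 + q^3*t^18*ti^9 + q^3*t^19*ti^10 + q^3*t^20*ti^11 + q^3*t^21*ti^12 + q^3*t^22*ti^13 + q^3*t^23*ti^14 + q^3*t^24*ti^15) * ht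
  have f20 : q^4*t^13*ti^8 = q^4*t^5 := by linear_combination (q^4*t^5 + q^4*t^6*ti + q^4*t^7*ti^2 + q^4*t^8*ti^3 + q^4*t^9*ti^4 + q^4*t^10*ti^5 + q^4*t^11*ti^6 + q^4*t^12*ti^7) * ht
  have f21 : q^4*t^14*ti^8 = q^4*t^6 := by linear_combination (q^4*t^6 + q^4*t^7*ti + q^4*t^8*ti^2 + q^4*t^9*ti^3 + q^4*t^10*ti^4 + q^4*t^11*ti^5 + q^4*t^12*ti^6 + q^4*t^13*ti^7) * ht
  have f22 : q^4*t^15*ti^8 = q^4*t^7 := by linear_combination (q^4*t^7 + q^4*t^8*ti + q^4*t^9*ti^2 + q^4*t^10*ti^3 + q^4*t^11*ti^4 + q^4*t^12*ti^5 + q^4*t^13*ti^6 + q^4*t^14*ti^7) * ht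
  have f23 : q^4*t^16*ti^8 = q^4*t^8 := by linear_combination (q^4*t^8 + q^4*t^9*ti + q^4*t^10*ti^2 + q^4*t^11*ti^3 + q^4*t^12*ti^4 + q^4*t^13*ti^5 + q^4*t^14*ti^6 + q^4*t^15*ti^7) * ht
  have f24 : q^4*t^17*ti^8 = q^4*t^9 := by linear_combination (q^4*t^9 + q^4*t^10*ti + q^4*t^11*ti^2 + q^4*t^12*ti^3 + q^4*t^13*ti^4 + q^4*t^14*ti^5 + q^4*t^15*ti^6 + q^4*t^16*ti^7) * ht
  have f25 : q^4*t^18*ti^8 = q^4*t^10 := by linear_combination (q^4*t^10 + q^4*t^11*ti + q^4*t^12*ti^2 + q^4*t^13*ti^3 + q^4*t^14*ti^4 + q^4*t^15*ti^5 + q^4*t^16*ti^6 + q^4*t^17*ti^7) * ht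
  have f26 : q^4*t^20*ti^8 = q^4*t^12 := by linear_combination (q^4*t^12 + q^4*t^13*ti + q^4*t^14*ti^2 + q^4*t^15*ti^3 + q^4*t^16*ti^4 + q^4*t^17*ti^5 + q^4*t^18*ti^6 + q^4*t^19*ti^7) * ht
  have f27 : q^4*t^21*ti^8 = q^4*t^13 := by linear_combination (q^4*t^13 + q^4*t^14*ti + q^4*t^15*ti^2 + q^4*t^16*ti^3 + q^4*t^17*ti^4 + q^4*t^18*ti^5 + q^4*t^19*ti^6 + q^4*t^20*ti^7) * ht
  have f28 : q^4*t^21*ti^16 = q^4*t^5 := by linear_combination (q^4*t^5 + q^4*t^6*ti + q^4*t^7*ti^2 + q^4*t^8*ti^3 + q^4*t^9*ti^4 + q^4*t^10*ti^5 + q^4*t^11*ti^6 + q^4*t^12*ti^7 + q^4*t^13*ti^8 + q^4*t^14*ti^9 + q^4*t^15*ti^10 + q^4*t^16*ti^11 + q^4*t^17*ti^12 + q^4*t^18*ti^13 + q^4*t^19*ti^14 + q^4*t^20*ti^15) * ht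
  have f29 : q^4*t^22*ti^16 = q^4*t^6 := by linear_combination (q^4*t^6 + q^4*t^7*ti + q^4*t^8*ti^2 + q^4*t^9*ti^3 + q^4*t^10*ti^4 + q^4*t^11*ti^5 + q^4*t^12*ti^6 + q^4*t^13*ti^7 + q^4*t^14*ti^8 + q^4*t^15*ti^9 + q^4*t^16*ti^10 + q^4*t^17*ti^11 + q^4*t^18*ti^12 + q^4*t^19*ti^13 + q^4*t^20*ti^14 + q^4*t^21*ti^15) * ht
  have f30 : q^4*t^23*ti^16 = q^4*t^7 := by linear_combination (q^4*t^7 + q^4*t^8*ti + q^4*t^9*ti^2 + q^4*t^10*ti^3 + q^4*t^11*ti^4 + q^4*t^12*ti^5 + q^4*t^13*ti^6 + q^4*t^14*ti^7 + q^4*t^15*ti^8 + q^4*t^16*ti^9 + q^4*t^17*ti^10 + q^4*t^18*ti^11 + q^4*t^19*ti^12 + q^4*t^20*ti^13 + q^4*t^21*ti^14 + q^4*t^22*ti^15) * ht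
  have f31 : q^4*t^24*ti^8 = q^4*t^16 := by linear_combination (q^4*t^16 + q^4*t^17*ti + q^4*t^18*ti^2 + q^4*t^19*ti^3 + q^4*t^20*ti^4 + q^4*t^21*ti^5 + q^4*t^22*ti^6 + q^4*t^23*ti^7) * ht
  have f32 : q^4*t^25*ti^16 = q^4*t^9 := by linear_combination (q^4*t^9 + q^4*t^10*ti + q^4*t^11*ti^2 + q^4*t^12*ti^3 + q^4*t^13*ti^4 + q^4*t^14*ti^5 + q^4*t^15*ti^6 + q^4*t^16*ti^7 + q^4*t^17*ti^8 + q^4*t^18*ti^9 + q^4*t^19*ti^10 + q^4*t^20*ti^11 + q^4*t^21*ti^12 + q^4*t^22*ti^13 + q^4*t^23*ti^14 + q^4*t^24*ti^15) * ht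
  have f33 : q^4*t^26*ti^16 = q^4*t^10 := by linear_combination (q^4*t^10 + q^4*t^11*ti + q^4*t^12*ti^2 + q^4*t^13*ti^3 + q^4*t^14*ti^4 + q^4*t^15*ti^5 + q^4*t^16*ti^6 + q^4*t^17*ti^7 + q^4*t^18*ti^8 + q^4*t^19*ti^9 + q^4*t^20*ti^10 + q^4*t^21*ti^11 + q^4*t^22*ti^12 + q^4*t^23*ti^13 + q^4*t^24*ti^14 + q^4*t^25*ti^15) * ht
  have f34 : q^4*t^28*ti^16 = q^4*t^12 := by linear_combination (q^4*t^12 + q^4*t^13*ti + q^4*t^14*ti^2 + q^4*t^15*ti^3 + q^4*t^16*ti^4 + q^4*t^17*ti^5 + q^4*t^18*ti^6 + q^4*t^19*ti^7 + q^4*t^20*ti^8 + q^4*t^21*ti^9 + q^4*t^22*ti^10 + q^4*t^23*ti^11 + q^4*t^24*ti^12 + q^4*t^25*ti^13 + q^4*t^26*ti^14 + q^4*t^27*ti^15) * ht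
  have f35 : q^4*t^29*ti^16 = q^4*t^13 := by linear_combination (q^4*t^13 + q^4*t^14*ti + q^4*t^15*ti^2 + q^4*t^16*ti^3 + q^4*t^17*ti^4 + q^4*t^18*ti^5 + q^4*t^19*ti^6 + q^4*t^20*ti^7 + q^4*t^21*ti^8 + q^4*t^22*ti^9 + q^4*t^23*ti^10 + q^4*t^24*ti^11 + q^4*t^25*ti^12 + q^4*t^26*ti^13 + q^4*t^27*ti^14 + q^4*t^28*ti^15) * ht
  have f36 : q^4*t^30*ti^24 = q^4*t^6 := by linear_combination (q^4*t^6 + q^4*t^7*ti + q^4*t^8*ti^2 + q^4*t^9*ti^3 + q^4*t^10*ti^4 + q^4*t^11*ti^5 + q^4*t^12*ti^6 + q^4*t^13*ti^7 + q^4*t^14*ti^8 + q^4*t^15*ti^9 + q^4*t^16*ti^10 + q^4*t^17*ti^11 + q^4*t^18*ti^12 + q^4*t^19*ti^13 + q^4*t^20*ti^14 + q^4*t^21*ti^15 + q^4*t^22*ti^16 + q^4*t^23*ti^17 + q^4*t^24*ti^18 + q^4*t^25*ti^19 + q^4*t^26*ti^20 + q^4*t^27*ti^21 + q^4*t^28*ti^22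 + q^4*t^29*ti^23) * ht
  have f37 : q^4*t^33*ti^24 = q^4*t^9 := by linear_combination (q^4*t^9 + q^4*t^10*ti + q^4*t^11*ti^2 + q^4*t^12*ti^3 + q^4*t^13*ti^4 + q^4*t^14*ti^5 + q^4*t^15*ti^6 + q^4*t^16*ti^7 + q^4*t^17*ti^8 + q^4*t^18*ti^9 + q^4*t^19*ti^10 + q^4*t^20*ti^11 + q^4*t^21*ti^12 + q^4*t^22*ti^13 + q^4*t^23*ti^14 + q^4*t^24*ti^15 + q^4*t^25*ti^16 + q^4*t^26*ti^17 + q^4*t^27*ti^18 + q^4*t^28*ti^19 + q^4*t^29*ti^20 + q^4*t^30*ti^21 + q^4*t^31*ti^22 + q^4*t^32*ti^23) * ht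
  have f38 : q^5*t^17*ti^8 = q^5*t^9 := by linear_combination (q^5*t^9 + q^5*t^10*ti + q^5*t^11*ti^2 + q^5*t^12*ti^3 + q^5*t^13*ti^4 + q^5*t^14*ti^5 + q^5*t^15*ti^6 + q^5*t^16*ti^7) * ht
  have f39 : q^5*t^18*ti^8 = q^5*t^10 := by linear_combination (q^5*t^10 + q^5*t^11*ti + q^5*t^12*ti^2 + q^5*t^13*ti^3 + q^5*t^14*ti^4 + q^5*t^15*ti^5 + q^5*t^16*ti^6 + q^5*t^17*ti^7) * ht
  have f40 : q^5*t^20*ti^8 = q^5*t^12 := by linear_combination (q^5*t^12 + q^5*t^13*ti + q^5*t^14*ti^2 + q^5*t^15*ti^3 + q^5*t^16*ti^4 + q^5*t^17*ti^5 + q^5*t^18*ti^6 + q^5*t^19*ti^7) * ht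
  have f41 : q^5*t^21*ti^8 = q^5*t^13 := by linear_combination (q^5*t^13 + q^5*t^14*ti + q^5*t^15*ti^2 + q^5*t^16*ti^3 + q^5*t^17*ti^4 + q^5*t^18*ti^5 + q^5*t^19*ti^6 + q^5*t^20*ti^7) * ht
  have f42 : q^5*t^22*ti^8 = q^5*t^14 := by linear_combination (q^5*t^14 + q^5*t^15*ti + q^5*t^16*ti^2 + q^5*t^17*ti^3 + q^5*t^18*ti^4 + q^5*t^19*ti^5 + q^5*t^20*ti^6 + q^5*t^21*ti^7) * ht
  have f43 : q^5*t^22*ti^16 = q^5*t^6 := by linear_combination (q^5*t^6 + q^5*t^7*ti + q^5*t^8*ti^2 + q^5*t^9*ti^3 + q^5*t^10*ti^4 + q^5*t^11*ti^5 + q^5*t^12*ti^6 + q^5*t^13*ti^7 + q^5*t^14*ti^8 + q^5*t^15*ti^9 + q^5*t^16*ti^10 + q^5*t^17*ti^11 + q^5*t^18*ti^12 + q^5*t^19*ti^13 + q^5*t^20*ti^14 + q^5*t^21*ti^15) * ht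
  have f44 : q^5*t^24*ti^8 = q^5*t^16 := by linear_combination (q^5*t^16 + q^5*t^17*ti + q^5*t^18*ti^2 + q^5*t^19*ti^3 + q^5*t^20*ti^4 + q^5*t^21*ti^5 + q^5*t^22*ti^6 + q^5*t^23*ti^7) * ht
  have f45 : q^5*t^25*ti^8 = q^5*t^17 := by linear_combination (q^5*t^17 + q^5*t^18*ti + q^5*t^19*ti^2 + q^5*t^20*ti^3 + q^5*t^21*ti^4 + q^5*t^22*ti^5 + q^5*t^23*ti^6 + q^5*t^24*ti^7) * ht
  have f46 : q^5*t^25*ti^16 = q^5*t^9 := by linear_combination (q^5*t^9 + q^5*t^10*ti + q^5*t^11*ti^2 + q^5*t^12*ti^3 + q^5*t^13*ti^4 + q^5*t^14*ti^5 + q^5*t^15*ti^6 + q^5*t^16*ti^7 + q^5*t^17*ti^8 + q^5*t^18*ti^9 + q^5*t^19*ti^10 + q^5*t^20*ti^11 + q^5*t^21*ti^12 + q^5*t^22*ti^13 + q^5*t^23*ti^14 + q^5*t^24*ti^15) * ht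
  have f47 : q^5*t^26*ti^16 = q^5*t^10 := by linear_combination (q^5*t^10 + q^5*t^11*ti + q^5*t^12*ti^2 + q^5*t^13*ti^3 + q^5*t^14*ti^4 + q^5*t^15*ti^5 + q^5*t^16*ti^6 + q^5*t^17*ti^7 + q^5*t^18*ti^8 + q^5*t^19*ti^9 + q^5*t^20*ti^10 + q^5*t^21*ti^11 + q^5*t^22*ti^12 + q^5*t^23*ti^13 + q^5*t^24*ti^14 + q^5*t^25*ti^15) * ht
  have f48 : q^5*t^28*ti^8 = q^5*t^20 := by linear_combination (q^5*t^20 + q^5*t^21*ti + q^5*t^22*ti^2 + q^5*t^23*ti^3 + q^5*t^24*ti^4 + q^5*t^25*ti^5 + q^5*t^26*ti^6 + q^5*t^27*ti^7) * ht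
  have f49 : q^5*t^28*ti^16 = q^5*t^12 := by linear_combination (q^5*t^12 + q^5*t^13*ti + q^5*t^14*ti^2 + q^5*t^15*ti^3 + q^5*t^16*ti^4 + q^5*t^17*ti^5 + q^5*t^18*ti^6 + q^5*t^19*ti^7 + q^5*t^20*ti^8 + q^5*t^21*ti^9 + q^5*t^22*ti^10 + q^5*t^23*ti^11 + q^5*t^24*ti^12 + q^5*t^25*ti^13 + q^5*t^26*ti^14 + q^5*t^27*ti^15) * ht
  have f50 : q^5*t^29*ti^16 = q^5*t^13 := by linear_combination (q^5*t^13 + q^5*t^14*ti + q^5*t^15*ti^2 + q^5*t^16*ti^3 + q^5*t^17*ti^4 + q^5*t^18*ti^5 + q^5*t^19*ti^6 + q^5*t^20*ti^7 + q^5*t^21*ti^8 + q^5*t^22*ti^9 + q^5*t^23*ti^10 + q^5*t^24*ti^11 + q^5*t^25*ti^12 + q^5*t^26*ti^13 + q^5*t^27*ti^14 + q^5*t^28*ti^15) * ht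
  have f51 : q^5*t^30*ti^16 = q^5*t^14 := by linear_combination (q^5*t^14 + q^5*t^15*ti + q^5*t^16*ti^2 + q^5*t^17*ti^3 + q^5*t^18*ti^4 + q^5*t^19*ti^5 + q^5*t^20*ti^6 + q^5*t^21*ti^7 + q^5*t^22*ti^8 + q^5*t^23*ti^9 + q^5*t^24*ti^10 + q^5*t^25*ti^11 + q^5*t^26*ti^12 + q^5*t^27*ti^13 + q^5*t^28*ti^14 + q^5*t^29*ti^15) * ht
  have f52 : q^5*t^30*ti^24 = q^5*t^6 := by linear_combination (q^5*t^6 + q^5*t^7*ti + q^5*t^8*ti^2 + q^5*t^9*ti^3 + q^5*t^10*ti^4 + q^5*t^11*ti^5 + q^5*t^12*ti^6 + q^5*t^13*ti^7 + q^5*t^14*ti^8 + q^5*t^15*ti^9 + q^5*t^16*ti^10 + q^5*t^17*ti^11 + q^5*t^18*ti^12 + q^5*t^19*ti^13 + q^5*t^20*ti^14 + q^5*t^21*ti^15 + q^5*t^22*ti^16 + q^5*t^23*ti^17 + q^5*t^24*ti^18 + q^5*t^25*ti^19 + q^5*t^26*ti^20 + q^5*t^27*ti^21 + q^5*t^28*ti^22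 + q^5*t^29*ti^23) * ht
  have f53 : q^5*t^32*ti^16 = q^5*t^16 := by linear_combination (q^5*t^16 + q^5*t^17*ti + q^5*t^18*ti^2 + q^5*t^19*ti^3 + q^5*t^20*ti^4 + q^5*t^21*ti^5 + q^5*t^22*ti^6 + q^5*t^23*ti^7 + q^5*t^24*ti^8 + q^5*t^25*ti^9 + q^5*t^26*ti^10 + q^5*t^27*ti^11 + q^5*t^28*ti^12 + q^5*t^29*ti^13 + q^5*t^30*ti^14 + q^5*t^31*ti^15) * ht
  have f54 : q^5*t^33*ti^16 = q^5*t^17 := by linear_combination (q^5*t^17 + q^5*t^18*ti + q^5*t^19*ti^2 + q^5*t^20*ti^3 + q^5*t^21*ti^4 + q^5*t^22*ti^5 + q^5*t^23*ti^6 + q^5*t^24*ti^7 + q^5*t^25*ti^8 + q^5*t^26*ti^9 + q^5*t^27*ti^10 + q^5*t^28*ti^11 + q^5*t^29*ti^12 + q^5*t^30*ti^13 + q^5*t^31*ti^14 + q^5*t^32*ti^15) * ht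
  have f55 : q^5*t^33*ti^24 = q^5*t^9 := by linear_combination (q^5*t^9 + q^5*t^10*ti + q^5*t^11*ti^2 + q^5*t^12*ti^3 + q^5*t^13*ti^4 + q^5*t^14*ti^5 + q^5*t^15*ti^6 + q^5*t^16*ti^7 + q^5*t^17*ti^8 + q^5*t^18*ti^9 + q^5*t^19*ti^10 + q^5*t^20*ti^11 + q^5*t^21*ti^12 + q^5*t^22*ti^13 + q^5*t^23*ti^14 + q^5*t^24*ti^15 + q^5*t^25*ti^16 + q^5*t^26*ti^17 + q^5*t^27*ti^18 + q^5*t^28*ti^19 + q^5*t^29*ti^20 + q^5*t^30*ti^21 + q^5*t^31*ti^22 + q^5*t^32*ti^23) * ht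
  have f56 : q^5*t^34*ti^24 = q^5*t^10 := by linear_combination (q^5*t^10 + q^5*t^11*ti + q^5*t^12*ti^2 + q^5*t^13*ti^3 + q^5*t^14*ti^4 + q^5*t^15*ti^5 + q^5*t^16*ti^6 + q^5*t^17*ti^7 + q^5*t^18*ti^8 + q^5*t^19*ti^9 + q^5*t^20*ti^10 + q^5*t^21*ti^11 + q^5*t^22*ti^12 + q^5*t^23*ti^13 + q^5*t^24*ti^14 + q^5*t^25*ti^15 + q^5*t^26*ti^16 + q^5*t^27*ti^17 + q^5*t^28*ti^18 + q^5*t^29*ti^19 + q^5*t^30*ti^20 + q^5*t^31*ti^21 + q^5*t^32*ti^22 + q^5*t^33*ti^23) * ht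
  have f57 : q^5*t^37*ti^24 = q^5*t^13 := by linear_combination (q^5*t^13 + q^5*t^14*ti + q^5*t^15*ti^2 + q^5*t^16*ti^3 + q^5*t^17*ti^4 + q^5*t^18*ti^5 + q^5*t^19*ti^6 + q^5*t^20*ti^7 + q^5*t^21*ti^8 + q^5*t^22*ti^9 + q^5*t^23*ti^10 + q^5*t^24*ti^11 + q^5*t^25*ti^12 + q^5*t^26*ti^13 + q^5*t^27*ti^14 + q^5*t^28*ti^15 + q^5*t^29*ti^16 + q^5*t^30*ti^17 + q^5*t^31*ti^18 + q^5*t^32*ti^19 + q^5*t^33*ti^20 + q^5*t^34*ti^21 + q^5*t^35*ti^22 + q^5*t^36*ti^23) * ht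
  have f58 : q^6*t^25*ti^8 = q^6*t^17 := by linear_combination (q^6*t^17 + q^6*t^18*ti + q^6*t^19*ti^2 + q^6*t^20*ti^3 + q^6*t^21*ti^4 + q^6*t^22*ti^5 + q^6*t^23*ti^6 + q^6*t^24*ti^7) * ht
  have f59 : q^6*t^28*ti^8 = q^6*t^20 := by linear_combination (q^6*t^20 + q^6*t^21*ti + q^6*t^22*ti^2 + q^6*t^23*ti^3 + q^6*t^24*ti^4 + q^6*t^25*ti^5 + q^6*t^26*ti^6 + q^6*t^27*ti^7) * ht
  have f60 : q^6*t^29*ti^8 = q^6*t^21 := by linear_combination (q^6*t^21 + q^6*t^22*ti + q^6*t^23*ti^2 + q^6*t^24*ti^3 + q^6*t^25*ti^4 + q^6*t^26*ti^5 + q^6*t^27*ti^6 + q^6*t^28*ti^7) * ht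
  have f61 : q^6*t^29*ti^16 = q^6*t^13 := by linear_combination (q^6*t^13 + q^6*t^14*ti + q^6*t^15*ti^2 + q^6*t^16*ti^3 + q^6*t^17*ti^4 + q^6*t^18*ti^5 + q^6*t^19*ti^6 + q^6*t^20*ti^7 + q^6*t^21*ti^8 + q^6*t^22*ti^9 + q^6*t^23*ti^10 + q^6*t^24*ti^11 + q^6*t^25*ti^12 + q^6*t^26*ti^13 + q^6*t^27*ti^14 + q^6*t^28*ti^15) * ht
  have f62 : q^6*t^30*ti^16 = q^6*t^14 := by linear_combination (q^6*t^14 + q^6*t^15*ti + q^6*t^16*ti^2 + q^6*t^17*ti^3 + q^6*t^18*ti^4 + q^6*t^19*ti^5 + q^6*t^20*ti^6 + q^6*t^21*ti^7 + q^6*t^22*ti^8 + q^6*t^23*ti^9 + q^6*t^24*ti^10 + q^6*t^25*ti^11 + q^6*t^26*ti^12 + q^6*t^27*ti^13 + q^6*t^28*ti^14 + q^6*t^29*ti^15) * ht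
  have f63 : q^6*t^32*ti^8 = q^6*t^24 := by linear_combination (q^6*t^24 + q^6*t^25*ti + q^6*t^26*ti^2 + q^6*t^27*ti^3 + q^6*t^28*ti^4 + q^6*t^29*ti^5 + q^6*t^30*ti^6 + q^6*t^31*ti^7) * ht
  have f64 : q^6*t^33*ti^16 = q^6*t^17 := by linear_combination (q^6*t^17 + q^6*t^18*ti + q^6*t^19*ti^2 + q^6*t^20*ti^3 + q^6*t^21*ti^4 + q^6*t^22*ti^5 + q^6*t^23*ti^6 + q^6*t^24*ti^7 + q^6*t^25*ti^8 + q^6*t^26*ti^9 + q^6*t^27*ti^10 + q^6*t^28*ti^11 + q^6*t^29*ti^12 + q^6*t^30*ti^13 + q^6*t^31*ti^14 + q^6*t^32*ti^15) * ht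
  have f65 : q^6*t^34*ti^24 = q^6*t^10 := by linear_combination (q^6*t^10 + q^6*t^11*ti + q^6*t^12*ti^2 + q^6*t^13*ti^3 + q^6*t^14*ti^4 + q^6*t^15*ti^5 + q^6*t^16*ti^6 + q^6*t^17*ti^7 + q^6*t^18*ti^8 + q^6*t^19*ti^9 + q^6*t^20*ti^10 + q^6*t^21*ti^11 + q^6*t^22*ti^12 + q^6*t^23*ti^13 + q^6*t^24*ti^14 + q^6*t^25*ti^15 + q^6*t^26*ti^16 + q^6*t^27*ti^17 + q^6*t^28*ti^18 + q^6*t^29*ti^19 + q^6*t^30*ti^20 + q^6*t^31*ti^21 + q^6*t^32*ti^22 + q^6*t^33*ti^23) * ht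
  have f66 : q^6*t^36*ti^16 = q^6*t^20 := by linear_combination (q^6*t^20 + q^6*t^21*ti + q^6*t^22*ti^2 + q^6*t^23*ti^3 + q^6*t^24*ti^4 + q^6*t^25*ti^5 + q^6*t^26*ti^6 + q^6*t^27*ti^7 + q^6*t^28*ti^8 + q^6*t^29*ti^9 + q^6*t^30*ti^10 + q^6*t^31*ti^11 + q^6*t^32*ti^12 + q^6*t^33*ti^13 + q^6*t^34*ti^14 + q^6*t^35*ti^15) * ht
  have f67 : q^6*t^37*ti^16 = q^6*t^21 := by linear_combination (q^6*t^21 + q^6*t^22*ti + q^6*t^23*ti^2 + q^6*t^24*ti^3 + q^6*t^25*ti^4 + q^6*t^26*ti^5 + q^6*t^27*ti^6 + q^6*t^28*ti^7 + q^6*t^29*ti^8 + q^6*t^30*ti^9 + q^6*t^31*ti^10 + q^6*t^32*ti^11 + q^6*t^33*ti^12 + q^6*t^34*ti^13 + q^6*t^35*ti^14 + q^6*t^36*ti^15) * ht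
  have f68 : q^6*t^37*ti^24 = q^6*t^13 := by linear_combination (q^6*t^13 + q^6*t^14*ti + q^6*t^15*ti^2 + q^6*t^16*ti^3 + q^6*t^17*ti^4 + q^6*t^18*ti^5 + q^6*t^19*ti^6 + q^6*t^20*ti^7 + q^6*t^21*ti^8 + q^6*t^22*ti^9 + q^6*t^23*ti^10 + q^6*t^24*ti^11 + q^6*t^25*ti^12 + q^6*t^26*ti^13 + q^6*t^27*ti^14 + q^6*t^28*ti^15 + q^6*t^29*ti^16 + q^6*t^30*ti^17 + q^6*t^31*ti^18 + q^6*t^32*ti^19 + q^6*t^33*ti^20 + q^6*t^34*ti^21 + q^6*t^35*ti^22 + q^6*t^36*ti^23) * ht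
  have f69 : q^6*t^38*ti^24 = q^6*t^14 := by linear_combination (q^6*t^14 + q^6*t^15*ti + q^6*t^16*ti^2 + q^6*t^17*ti^3 + q^6*t^18*ti^4 + q^6*t^19*ti^5 + q^6*t^20*ti^6 + q^6*t^21*ti^7 + q^6*t^22*ti^8 + q^6*t^23*ti^9 + q^6*t^24*ti^10 + q^6*t^25*ti^11 + q^6*t^26*ti^12 + q^6*t^27*ti^13 + q^6*t^28*ti^14 + q^6*t^29*ti^15 + q^6*t^30*ti^16 + q^6*t^31*ti^17 + q^6*t^32*ti^18 + q^6*t^33*ti^19 + q^6*t^34*ti^20 + q^6*t^35*ti^21 + q^6*t^36*ti^22 + q^6*t^37*ti^23) * ht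
  have f70 : q^6*t^41*ti^24 = q^6*t^17 := by linear_combination (q^6*t^17 + q^6*t^18*ti + q^6*t^19*ti^2 + q^6*t^20*ti^3 + q^6*t^21*ti^4 + q^6*t^22*ti^5 + q^6*t^23*ti^6 + q^6*t^24*ti^7 + q^6*t^25*ti^8 + q^6*t^26*ti^9 + q^6*t^27*ti^10 + q^6*t^28*ti^11 + q^6*t^29*ti^12 + q^6*t^30*ti^13 + q^6*t^31*ti^14 + q^6*t^32*ti^15 + q^6*t^33*ti^16 + q^6*t^34*ti^17 + q^6*t^35*ti^18 + q^6*t^36*ti^19 + q^6*t^37*ti^20 + q^6*t^38*ti^21 + q^6*t^39*ti^22 + q^6*t^40*ti^23) * ht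
  have f71 : q^6*t^42*ti^32 = q^6*t^10 := by linear_combination (q^6*t^10 + q^6*t^11*ti + q^6*t^12*ti^2 + q^6*t^13*ti^3 + q^6*t^14*ti^4 + q^6*t^15*ti^5 + q^6*t^16*ti^6 + q^6*t^17*ti^7 + q^6*t^18*ti^8 + q^6*t^19*ti^9 + q^6*t^20*ti^10 + q^6*t^21*ti^11 + q^6*t^22*ti^12 + q^6*t^23*ti^13 + q^6*t^24*ti^14 + q^6*t^25*ti^15 + q^6*t^26*ti^16 + q^6*t^27*ti^17 + q^6*t^28*ti^18 + q^6*t^29*ti^19 + q^6*t^30*ti^20 + q^6*t^31*ti^21 + q^6*t^32*ti^22 + q^6*t^33*ti^23 + q^6*t^34*ti^24 + q^6*t^35*ti^25 + q^6*t^36*ti^26 + q^6*t^37*ti^27 + q^6*t^38*ti^28 + q^6*t^39*ti^29 + q^6*t^40*ti^30 + q^6*t^41*ti^31) * ht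
  simp only [HD43]
  linear_combination (-1) * f0 + (-1) * f1 + (-1) * f2 + (-1) * f3 + (-1) * f4 + (-2) * f5 + (-1) * f6 + f7 + (-1) * f8 + (-1) * f9 + (-3) * f10 + (-2) * f11 + (-2) * f12 + (-2) * f13 + f14 + (-1) * f15 + 2 * f16 + f17 + f18 + f19 + (-1) * f20 + (-1) * f21 + (-1) * f22 + (-1) * f23 + (-3) * f24 + (-2) * f25 + (-2) * f26 + (-2) * f27 + f28 + 2 * f29 + f30 + (-1) * f31 + 3 * f32 + f33 + f34 + f35 + (-1) * f36 + (-1) * f37 + (-1) * f38 + (-1) * f39 + (-1) * f40 + (-3) * f41 + (-1) * f42 + f43 + (-2) * f44 + (-2) * f45 + 2 * f46 + 2 * f47 + (-1) * f48 + f49 + 3 * f50 + f51 + (-1) * f52 + f53 + f54 + (-1) * f55 + (-1) * f56 + (-1) * f57 + (-1) * f58 + (-1) * f59 + (-1) * f60 + f61 + f62 + (-1) * f63 + 2 * f64 + (-1) * f65 + f66 + f67 + (-1) * f68 + (-1) * f69 + (-1) * f70 + f71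

lemma key5 {R : Type*} [CommRing R] (q t qi ti : R) (hq : q*qi=1) (ht : t*ti=1) :
    HD43 q t (-(qi * ti^12)) = q^6 * t^24 := by
  have f0 : q*qi*t^9*ti^12 = ti^3 := by linear_combination (q*qi*ti^3 + q*qi*t*ti^4 + q*qi*t^2*ti^5 + q*qi*t^3*ti^6 + q*qi*t^4*ti^7 + q*qi*t^5*ti^8 + q*qi*t^6*ti^9 + q*qi*t^7*ti^10 + q*qi*t^8*ti^11) * ht + (ti^3) * hq
  have f1 : q*qi*t^12*ti^12 = 1 := by linear_combination (q*qi + q*qi*t*ti + q*qi*t^2*ti^2 + q*qi*t^3*ti^3 + q*qi*t^4*ti^4 + q*qi*t^5*ti^5 + q*qi*t^6*ti^6 + q*qi*t^7*ti^7 + q*qi*t^8*ti^8 + q*qi*t^9*ti^9 + q*qi*t^10*ti^10 + q*qi*t^11*ti^11) * ht + (1) * hq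
  have f2 : q^2*qi*t^9*ti^12 = q*ti^3 := by linear_combination (q^2*qi*ti^3 + q^2*qi*t*ti^4 + q^2*qi*t^2*ti^5 + q^2*qi*t^3*ti^6 + q^2*qi*t^4*ti^7 + q^2*qi*t^5*ti^8 + q^2*qi*t^6*ti^9 + q^2*qi*t^7*ti^10 + q^2*qi*t^8*ti^11) * ht + (q*ti^3) * hq
  have f3 : q^2*qi*t^10*ti^12 = q*ti^2 := by linear_combination (q^2*qi*ti^2 + q^2*qi*t*ti^3 + q^2*qi*t^2*ti^4 + q^2*qi*t^3*ti^5 + q^2*qi*t^4*ti^6 + q^2*qi*t^5*ti^7 + q^2*qi*t^6*ti^8 + q^2*qi*t^7*ti^9 + q^2*qi*t^8*ti^10 + q^2*qi*t^9*ti^11) * ht + (q*ti^2) * hq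
  have f4 : q^2*qi*t^12*ti^12 = q := by linear_combination (q^2*qi + q^2*qi*t*ti + q^2*qi*t^2*ti^2 + q^2*qi*t^3*ti^3 + q^2*qi*t^4*ti^4 + q^2*qi*t^5*ti^5 + q^2*qi*t^6*ti^6 + q^2*qi*t^7*ti^7 + q^2*qi*t^8*ti^8 + q^2*qi*t^9*ti^9 + q^2*qi*t^10*ti^10 + q^2*qi*t^11*ti^11) * ht + (q) * hq
  have f5 : q^2*qi*t^13*ti^12 = q*t := by linear_combination (q^2*qi*t + q^2*qi*t^2*ti + q^2*qi*t^3*ti^2 + q^2*qi*t^4*ti^3 + q^2*qi*t^5*ti^4 + q^2*qi*t^6*ti^5 + q^2*qi*t^7*ti^6 + q^2*qi*t^8*ti^7 + q^2*qi*t^9*ti^8 + q^2*qi*t^10*ti^9 + q^2*qi*t^11*ti^10 + q^2*qi*t^12*ti^11) * ht + (q*t) * hq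
  have f6 : q^2*qi*t^16*ti^12 = q*t^4 := by linear_combination (q^2*qi*t^4 + q^2*qi*t^5*ti + q^2*qi*t^6*ti^2 + q^2*qi*t^7*ti^3 + q^2*qi*t^8*ti^4 + q^2*qi*t^9*ti^5 + q^2*qi*t^10*ti^6 + q^2*qi*t^11*ti^7 + q^2*qi*t^12*ti^8 + q^2*qi*t^13*ti^9 + q^2*qi*t^14*ti^10 + q^2*qi*t^15*ti^11) * ht + (q*t^4) * hq
  have f7 : q^2*qi^2*t^21*ti^24 = ti^3 := by linear_combination (q^2*qi^2*ti^3 + q^2*qi^2*t*ti^4 + q^2*qi^2*t^2*ti^5 + q^2*qi^2*t^3*ti^6 + q^2*qi^2*t^4*ti^7 + q^2*qi^2*t^5*ti^8 + q^2*qi^2*t^6*ti^9 + q^2*qi^2*t^7*ti^10 + q^2*qi^2*t^8*ti^11 + q^2*qi^2*t^9*ti^12 + q^2*qi^2*t^10*ti^13 + q^2*qi^2*t^11*ti^14 + q^2*qi^2*t^12*ti^15 + q^2*qi^2*t^13*ti^16 + q^2*qi^2*t^14*ti^17 + q^2*qi^2*t^15*ti^18 + q^2*qi^2*t^16*ti^19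 + q^2*qi^2*t^17*ti^20 + q^2*qi^2*t^18*ti^21 + q^2*qi^2*t^19*ti^22 + q^2*qi^2*t^20*ti^23) * ht + (ti^3 + q*qi*ti^3) * hq
  have f8 : q^3*qi*t^10*ti^12 = q^2*ti^2 := by linear_combination (q^3*qi*ti^2 + q^3*qi*t*ti^3 + q^3*qi*t^2*ti^4 + q^3*qi*t^3*ti^5 + q^3*qi*t^4*ti^6 + q^3*qi*t^5*ti^7 + q^3*qi*t^6*ti^8 + q^3*qi*t^7*ti^9 + q^3*qi*t^8*ti^10 + q^3*qi*t^9*ti^11) * ht + (q^2*ti^2) * hq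
  have f9 : q^3*qi*t^11*ti^12 = q^2*ti := by linear_combination (q^3*qi*ti + q^3*qi*t*ti^2 + q^3*qi*t^2*ti^3 + q^3*qi*t^3*ti^4 + q^3*qi*t^4*ti^5 + q^3*qi*t^5*ti^6 + q^3*qi*t^6*ti^7 + q^3*qi*t^7*ti^8 + q^3*qi*t^8*ti^9 + q^3*qi*t^9*ti^10 + q^3*qi*t^10*ti^11) * ht + (q^2*ti) * hq
  have f10 : q^3*qi*t^13*ti^12 = q^2*t := by linear_combination (q^3*qi*t + q^3*qi*t^2*ti + q^3*qi*t^3*ti^2 + q^3*qi*t^4*ti^3 + q^3*qi*t^5*ti^4 + q^3*qi*t^6*ti^5 + q^3*qi*t^7*ti^6 + q^3*qi*t^8*ti^7 + q^3*qi*t^9*ti^8 + q^3*qi*t^10*ti^9 + q^3*qi*t^11*ti^10 + q^3*qi*t^12*ti^11) * ht + (q^2*t) * hq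
  have f11 : q^3*qi*t^14*ti^12 = q^2*t^2 := by linear_combination (q^3*qi*t^2 + q^3*qi*t^3*ti + q^3*qi*t^4*ti^2 + q^3*qi*t^5*ti^3 + q^3*qi*t^6*ti^4 + q^3*qi*t^7*ti^5 + q^3*qi*t^8*ti^6 + q^3*qi*t^9*ti^7 + q^3*qi*t^10*ti^8 + q^3*qi*t^11*ti^9 + q^3*qi*t^12*ti^10 + q^3*qi*t^13*ti^11) * ht + (q^2*t^2) * hq
  have f12 : q^3*qi*t^16*ti^12 = q^2*t^4 := by linear_combination (q^3*qi*t^4 + q^3*qi*t^5*ti + q^3*qi*t^6*ti^2 + q^3*qi*t^7*ti^3 + q^3*qi*t^8*ti^4 + q^3*qi*t^9*ti^5 + q^3*qi*t^10*ti^6 + q^3*qi*t^11*ti^7 + q^3*qi*t^12*ti^8 + q^3*qi*t^13*ti^9 + q^3*qi*t^14*ti^10 + q^3*qi*t^15*ti^11) * ht + (q^2*t^4) * hq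
  have f13 : q^3*qi*t^17*ti^12 = q^2*t^5 := by linear_combination (q^3*qi*t^5 + q^3*qi*t^6*ti + q^3*qi*t^7*ti^2 + q^3*qi*t^8*ti^3 + q^3*qi*t^9*ti^4 + q^3*qi*t^10*ti^5 + q^3*qi*t^11*ti^6 + q^3*qi*t^12*ti^7 + q^3*qi*t^13*ti^8 + q^3*qi*t^14*ti^9 + q^3*qi*t^15*ti^10 + q^3*qi*t^16*ti^11) * ht + (q^2*t^5) * hq
  have f14 : q^3*qi*t^20*ti^12 = q^2*t^8 := by linear_combination (q^3*qi*t^8 + q^3*qi*t^9*ti + q^3*qi*t^10*ti^2 + q^3*qi*t^11*ti^3 + q^3*qi*t^12*ti^4 + q^3*qi*t^13*ti^5 + q^3*qi*t^14*ti^6 + q^3*qi*t^15*ti^7 + q^3*qi*t^16*ti^8 + q^3*qi*t^17*ti^9 + q^3*qi*t^18*ti^10 + q^3*qi*t^19*ti^11) * ht + (q^2*t^8) * hq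
  have f15 : q^3*qi^2*t^18*ti^24 = q*ti^6 := by linear_combination (q^3*qi^2*ti^6 + q^3*qi^2*t*ti^7 + q^3*qi^2*t^2*ti^8 + q^3*qi^2*t^3*ti^9 + q^3*qi^2*t^4*ti^10 + q^3*qi^2*t^5*ti^11 + q^3*qi^2*t^6*ti^12 + q^3*qi^2*t^7*ti^13 + q^3*qi^2*t^8*ti^14 + q^3*qi^2*t^9*ti^15 + q^3*qi^2*t^10*ti^16 + q^3*qi^2*t^11*ti^17 + q^3*qi^2*t^12*ti^18 + q^3*qi^2*t^13*ti^19 + q^3*qi^2*t^14*ti^20 + q^3*qi^2*t^15*ti^21 + q^3*qi^2*t^16*ti^22 + q^3*qi^2*t^17*ti^23) * ht + (q*ti^6 + q^2*qi*ti^6) * hq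
  have f16 : q^3*qi^2*t^21*ti^24 = q*ti^3 := by linear_combination (q^3*qi^2*ti^3 + q^3*qi^2*t*ti^4 + q^3*qi^2*t^2*ti^5 + q^3*qi^2*t^3*ti^6 + q^3*qi^2*t^4*ti^7 + q^3*qi^2*t^5*ti^8 + q^3*qi^2*t^6*ti^9 + q^3*qi^2*t^7*ti^10 + q^3*qi^2*t^8*ti^11 + q^3*qi^2*t^9*ti^12 + q^3*qi^2*t^10*ti^13 + q^3*qi^2*t^11*ti^14 + q^3*qi^2*t^12*ti^15 + q^3*qi^2*t^13*ti^16 + q^3*qi^2*t^14*ti^17 + q^3*qi^2*t^15*ti^18 + q^3*qi^2*t^16*ti^19 + q^3*qi^2*t^17*ti^20 + q^3*qi^2*t^18*ti^21 + q^3*qi^2*t^19*ti^22 + q^3*qi^2*t^20*ti^23) * ht + (q*ti^3 + q^2*qi*ti^3) * hq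
  have f17 : q^3*qi^2*t^22*ti^24 = q*ti^2 := by linear_combination (q^3*qi^2*ti^2 + q^3*qi^2*t*ti^3 + q^3*qi^2*t^2*ti^4 + q^3*qi^2*t^3*ti^5 + q^3*qi^2*t^4*ti^6 + q^3*qi^2*t^5*ti^7 + q^3*qi^2*t^6*ti^8 + q^3*qi^2*t^7*ti^9 + q^3*qi^2*t^8*ti^10 + q^3*qi^2*t^9*ti^11 + q^3*qi^2*t^10*ti^12 + q^3*qi^2*t^11*ti^13 + q^3*qi^2*t^12*ti^14 + q^3*qi^2*t^13*ti^15 + q^3*qi^2*t^14*ti^16 + q^3*qi^2*t^15*ti^17 + q^3*qi^2*t^16*ti^18 + q^3*qi^2*t^17*ti^19 + q^3*qi^2*t^18*ti^20 + q^3*qi^2*t^19*ti^21 + q^3*qi^2*t^20*ti^22 + q^3*qi^2*t^21*ti^23) * ht + (q*ti^2 + q^2*qi*ti^2) * hq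
  have f18 : q^3*qi^2*t^24*ti^24 = q := by linear_combination (q^3*qi^2 + q^3*qi^2*t*ti + q^3*qi^2*t^2*ti^2 + q^3*qi^2*t^3*ti^3 + q^3*qi^2*t^4*ti^4 + q^3*qi^2*t^5*ti^5 + q^3*qi^2*t^6*ti^6 + q^3*qi^2*t^7*ti^7 + q^3*qi^2*t^8*ti^8 + q^3*qi^2*t^9*ti^9 + q^3*qi^2*t^10*ti^10 + q^3*qi^2*t^11*ti^11 + q^3*qi^2*t^12*ti^12 + q^3*qi^2*t^13*ti^13 + q^3*qi^2*t^14*ti^14 + q^3*qi^2*t^15*ti^15 + q^3*qi^2*t^16*ti^16 + q^3*qi^2*t^17*ti^17 + q^3*qi^2*t^18*ti^18 + q^3*qi^2*t^19*ti^19 + q^3*qi^2*t^20*ti^20 + q^3*qi^2*t^21*ti^21 + q^3*qi^2*t^22*ti^22 + q^3*qi^2*t^23*ti^23) * ht + (q + q^2*qi) * hq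
  have f19 : q^3*qi^2*t^25*ti^24 = q*t := by linear_combination (q^3*qi^2*t + q^3*qi^2*t^2*ti + q^3*qi^2*t^3*ti^2 + q^3*qi^2*t^4*ti^3 + q^3*qi^2*t^5*ti^4 + q^3*qi^2*t^6*ti^5 + q^3*qi^2*t^7*ti^6 + q^3*qi^2*t^8*ti^7 + q^3*qi^2*t^9*ti^8 + q^3*qi^2*t^10*ti^9 + q^3*qi^2*t^11*ti^10 + q^3*qi^2*t^12*ti^11 + q^3*qi^2*t^13*ti^12 + q^3*qi^2*t^14*ti^13 + q^3*qi^2*t^15*ti^14 + q^3*qi^2*t^16*ti^15 + q^3*qi^2*t^17*ti^16 + q^3*qi^2*t^18*ti^17 + q^3*qi^2*t^19*ti^18 + q^3*qi^2*t^20*ti^19 + q^3*qi^2*t^21*ti^20 + q^3*qi^2*t^22*ti^21 + q^3*qi^2*t^23*ti^22 + q^3*qi^2*t^24*ti^23) * ht + (q*t + q^2*qi*t) * hq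
  have f20 : q^4*qi*t^13*ti^12 = q^3*t := by linear_combination (q^4*qi*t + q^4*qi*t^2*ti + q^4*qi*t^3*ti^2 + q^4*qi*t^4*ti^3 + q^4*qi*t^5*ti^4 + q^4*qi*t^6*ti^5 + q^4*qi*t^7*ti^6 + q^4*qi*t^8*ti^7 + q^4*qi*t^9*ti^8 + q^4*qi*t^10*ti^9 + q^4*qi*t^11*ti^10 + q^4*qi*t^12*ti^11) * ht + (q^3*t) * hq
  have f21 : q^4*qi*t^14*ti^12 = q^3*t^2 := by linear_combination (q^4*qi*t^2 + q^4*qi*t^3*ti + q^4*qi*t^4*ti^2 + q^4*qi*t^5*ti^3 + q^4*qi*t^6*ti^4 + q^4*qi*t^7*ti^5 + q^4*qi*t^8*ti^6 + q^4*qi*t^9*ti^7 + q^4*qi*t^10*ti^8 + q^4*qi*t^11*ti^9 + q^4*qi*t^12*ti^10 + q^4*qi*t^13*ti^11) * ht + (q^3*t^2) * hq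
  have f22 : q^4*qi*t^15*ti^12 = q^3*t^3 := by linear_combination (q^4*qi*t^3 + q^4*qi*t^4*ti + q^4*qi*t^5*ti^2 + q^4*qi*t^6*ti^3 + q^4*qi*t^7*ti^4 + q^4*qi*t^8*ti^5 + q^4*qi*t^9*ti^6 + q^4*qi*t^10*ti^7 + q^4*qi*t^11*ti^8 + q^4*qi*t^12*ti^9 + q^4*qi*t^13*ti^10 + q^4*qi*t^14*ti^11) * ht + (q^3*t^3) * hq
  have f23 : q^4*qi*t^16*ti^12 = q^3*t^4 := by linear_combination (q^4*qi*t^4 + q^4*qi*t^5*ti + q^4*qi*t^6*ti^2 + q^4*qi*t^7*ti^3 + q^4*qi*t^8*ti^4 + q^4*qi*t^9*ti^5 + q^4*qi*t^10*ti^6 + q^4*qi*t^11*ti^7 + q^4*qi*t^12*ti^8 + q^4*qi*t^13*ti^9 + q^4*qi*t^14*ti^10 + q^4*qi*t^15*ti^11) * ht + (q^3*t^4) * hq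
  have f24 : q^4*qi*t^17*ti^12 = q^3*t^5 := by linear_combination (q^4*qi*t^5 + q^4*qi*t^6*ti + q^4*qi*t^7*ti^2 + q^4*qi*t^8*ti^3 + q^4*qi*t^9*ti^4 + q^4*qi*t^10*ti^5 + q^4*qi*t^11*ti^6 + q^4*qi*t^12*ti^7 + q^4*qi*t^13*ti^8 + q^4*qi*t^14*ti^9 + q^4*qi*t^15*ti^10 + q^4*qi*t^16*ti^11) * ht + (q^3*t^5) * hq
  have f25 : q^4*qi*t^18*ti^12 = q^3*t^6 := by linear_combination (q^4*qi*t^6 + q^4*qi*t^7*ti + q^4*qi*t^8*ti^2 + q^4*qi*t^9*ti^3 + q^4*qi*t^10*ti^4 + q^4*qi*t^11*ti^5 + q^4*qi*t^12*ti^6 + q^4*qi*t^13*ti^7 + q^4*qi*t^14*ti^8 + q^4*qi*t^15*ti^9 + q^4*qi*t^16*ti^10 + q^4*qi*t^17*ti^11) * ht + (q^3*t^6) * hq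
  have f26 : q^4*qi*t^20*ti^12 = q^3*t^8 := by linear_combination (q^4*qi*t^8 + q^4*qi*t^9*ti + q^4*qi*t^10*ti^2 + q^4*qi*t^11*ti^3 + q^4*qi*t^12*ti^4 + q^4*qi*t^13*ti^5 + q^4*qi*t^14*ti^6 + q^4*qi*t^15*ti^7 + q^4*qi*t^16*ti^8 + q^4*qi*t^17*ti^9 + q^4*qi*t^18*ti^10 + q^4*qi*t^19*ti^11) * ht + (q^3*t^8) * hq
  have f27 : q^4*qi*t^21*ti^12 = q^3*t^9 := by linear_combination (q^4*qi*t^9 + q^4*qi*t^10*ti + q^4*qi*t^11*ti^2 + q^4*qi*t^12*ti^3 + q^4*qi*t^13*ti^4 + q^4*qi*t^14*ti^5 + q^4*qi*t^15*ti^6 + q^4*qi*t^16*ti^7 + q^4*qi*t^17*ti^8 + q^4*qi*t^18*ti^9 + q^4*qi*t^19*ti^10 + q^4*qi*t^20*ti^11) * ht + (q^3*t^9) * hq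
  have f28 : q^4*qi*t^24*ti^12 = q^3*t^12 := by linear_combination (q^4*qi*t^12 + q^4*qi*t^13*ti + q^4*qi*t^14*ti^2 + q^4*qi*t^15*ti^3 + q^4*qi*t^16*ti^4 + q^4*qi*t^17*ti^5 + q^4*qi*t^18*ti^6 + q^4*qi*t^19*ti^7 + q^4*qi*t^20*ti^8 + q^4*qi*t^21*ti^9 + q^4*qi*t^22*ti^10 + q^4*qi*t^23*ti^11) * ht + (q^3*t^12) * hq
  have f29 : q^4*qi^2*t^21*ti^24 = q^2*ti^3 := by linear_combination (q^4*qi^2*ti^3 + q^4*qi^2*t*ti^4 + q^4*qi^2*t^2*ti^5 + q^4*qi^2*t^3*ti^6 + q^4*qi^2*t^4*ti^7 + q^4*qi^2*t^5*ti^8 + q^4*qi^2*t^6*ti^9 + q^4*qi^2*t^7*ti^10 + q^4*qi^2*t^8*ti^11 + q^4*qi^2*t^9*ti^12 + q^4*qi^2*t^10*ti^13 + q^4*qi^2*t^11*ti^14 + q^4*qi^2*t^12*ti^15 + q^4*qi^2*t^13*ti^16 + q^4*qi^2*t^14*ti^17 + q^4*qi^2*t^15*ti^18 + q^4*qi^2*t^16*ti^19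 + q^4*qi^2*t^17*ti^20 + q^4*qi^2*t^18*ti^21 + q^4*qi^2*t^19*ti^22 + q^4*qi^2*t^20*ti^23) * ht + (q^2*ti^3 + q^3*qi*ti^3) * hq
  have f30 : q^4*qi^2*t^22*ti^24 = q^2*ti^2 := by linear_combination (q^4*qi^2*ti^2 + q^4*qi^2*t*ti^3 + q^4*qi^2*t^2*ti^4 + q^4*qi^2*t^3*ti^5 + q^4*qi^2*t^4*ti^6 + q^4*qi^2*t^5*ti^7 + q^4*qi^2*t^6*ti^8 + q^4*qi^2*t^7*ti^9 + q^4*qi^2*t^8*ti^10 + q^4*qi^2*t^9*ti^11 + q^4*qi^2*t^10*ti^12 + q^4*qi^2*t^11*ti^13 + q^4*qi^2*t^12*ti^14 + q^4*qi^2*t^13*ti^15 + q^4*qi^2*t^14*ti^16 + q^4*qi^2*t^15*ti^17 + q^4*qi^2*t^16*ti^18 + q^4*qi^2*t^17*ti^19 + q^4*qi^2*t^18*ti^20 + q^4*qi^2*t^19*ti^21 + q^4*qi^2*t^20*ti^22 + q^4*qi^2*t^21*ti^23) * ht + (q^2*ti^2 + q^3*qi*ti^2) * hq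
  have f31 : q^4*qi^2*t^23*ti^24 = q^2*ti := by linear_combination (q^4*qi^2*ti + q^4*qi^2*t*ti^2 + q^4*qi^2*t^2*ti^3 + q^4*qi^2*t^3*ti^4 + q^4*qi^2*t^4*ti^5 + q^4*qi^2*t^5*ti^6 + q^4*qi^2*t^6*ti^7 + q^4*qi^2*t^7*ti^8 + q^4*qi^2*t^8*ti^9 + q^4*qi^2*t^9*ti^10 + q^4*qi^2*t^10*ti^11 + q^4*qi^2*t^11*ti^12 + q^4*qi^2*t^12*ti^13 + q^4*qi^2*t^13*ti^14 + q^4*qi^2*t^14*ti^15 + q^4*qi^2*t^15*ti^16 + q^4*qi^2*t^16*ti^17 + q^4*qi^2*t^17*ti^18 + q^4*qi^2*t^18*ti^19 + q^4*qi^2*t^19*ti^20 + q^4*qi^2*t^20*ti^21 + q^4*qi^2*t^21*ti^22 + q^4*qi^2*t^22*ti^23) * ht + (q^2*ti + q^3*qi*ti) * hq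
  have f32 : q^4*qi^2*t^25*ti^24 = q^2*t := by linear_combination (q^4*qi^2*t + q^4*qi^2*t^2*ti + q^4*qi^2*t^3*ti^2 + q^4*qi^2*t^4*ti^3 + q^4*qi^2*t^5*ti^4 + q^4*qi^2*t^6*ti^5 + q^4*qi^2*t^7*ti^6 + q^4*qi^2*t^8*ti^7 + q^4*qi^2*t^9*ti^8 + q^4*qi^2*t^10*ti^9 + q^4*qi^2*t^11*ti^10 + q^4*qi^2*t^12*ti^11 + q^4*qi^2*t^13*ti^12 + q^4*qi^2*t^14*ti^13 + q^4*qi^2*t^15*ti^14 + q^4*qi^2*t^16*ti^15 + q^4*qi^2*t^17*ti^16 + q^4*qi^2*t^18*ti^17 + q^4*qi^2*t^19*ti^18 + q^4*qi^2*t^20*ti^19 + q^4*qi^2*t^21*ti^20 + q^4*qi^2*t^22*ti^21 + q^4*qi^2*t^23*ti^22 + q^4*qi^2*t^24*ti^23) * ht + (q^2*t + q^3*qi*t) * hq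
  have f33 : q^4*qi^2*t^26*ti^24 = q^2*t^2 := by linear_combination (q^4*qi^2*t^2 + q^4*qi^2*t^3*ti + q^4*qi^2*t^4*ti^2 + q^4*qi^2*t^5*ti^3 + q^4*qi^2*t^6*ti^4 + q^4*qi^2*t^7*ti^5 + q^4*qi^2*t^8*ti^6 + q^4*qi^2*t^9*ti^7 + q^4*qi^2*t^10*ti^8 + q^4*qi^2*t^11*ti^9 + q^4*qi^2*t^12*ti^10 + q^4*qi^2*t^13*ti^11 + q^4*qi^2*t^14*ti^12 + q^4*qi^2*t^15*ti^13 + q^4*qi^2*t^16*ti^14 + q^4*qi^2*t^17*ti^15 + q^4*qi^2*t^18*ti^16 + q^4*qi^2*t^19*ti^17 + q^4*qi^2*t^20*ti^18 + q^4*qi^2*t^21*ti^19 + q^4*qi^2*t^22*ti^20 + q^4*qi^2*t^23*ti^21 + q^4*qi^2*t^24*ti^22 + q^4*qi^2*t^25*ti^23) * ht + (q^2*t^2 + q^3*qi*t^2) * hq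
  have f34 : q^4*qi^2*t^28*ti^24 = q^2*t^4 := by linear_combination (q^4*qi^2*t^4 + q^4*qi^2*t^5*ti + q^4*qi^2*t^6*ti^2 + q^4*qi^2*t^7*ti^3 + q^4*qi^2*t^8*ti^4 + q^4*qi^2*t^9*ti^5 + q^4*qi^2*t^10*ti^6 + q^4*qi^2*t^11*ti^7 + q^4*qi^2*t^12*ti^8 + q^4*qi^2*t^13*ti^9 + q^4*qi^2*t^14*ti^10 + q^4*qi^2*t^15*ti^11 + q^4*qi^2*t^16*ti^12 + q^4*qi^2*t^17*ti^13 + q^4*qi^2*t^18*ti^14 + q^4*qi^2*t^19*ti^15 + q^4*qi^2*t^20*ti^16 + q^4*qi^2*t^21*ti^17 + q^4*qi^2*t^22*ti^18 + q^4*qi^2*t^23*ti^19 + q^4*qi^2*t^24*ti^20 + q^4*qi^2*t^25*ti^21 + q^4*qi^2*t^26*ti^22 + q^4*qi^2*t^27*ti^23) * ht + (q^2*t^4 + q^3*qi*t^4) * hq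
  have f35 : q^4*qi^2*t^29*ti^24 = q^2*t^5 := by linear_combination (q^4*qi^2*t^5 + q^4*qi^2*t^6*ti + q^4*qi^2*t^7*ti^2 + q^4*qi^2*t^8*ti^3 + q^4*qi^2*t^9*ti^4 + q^4*qi^2*t^10*ti^5 + q^4*qi^2*t^11*ti^6 + q^4*qi^2*t^12*ti^7 + q^4*qi^2*t^13*ti^8 + q^4*qi^2*t^14*ti^9 + q^4*qi^2*t^15*ti^10 + q^4*qi^2*t^16*ti^11 + q^4*qi^2*t^17*ti^12 + q^4*qi^2*t^18*ti^13 + q^4*qi^2*t^19*ti^14 + q^4*qi^2*t^20*ti^15 + q^4*qi^2*t^21*ti^16 + q^4*qi^2*t^22*ti^17 + q^4*qi^2*t^23*ti^18 + q^4*qi^2*t^24*ti^19 + q^4*qi^2*t^25*ti^20 + q^4*qi^2*t^26*ti^21 + q^4*qi^2*t^27*ti^22 + q^4*qi^2*t^28*ti^23) * ht + (q^2*t^5 + q^3*qi*t^5) * hq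
  have f36 : q^4*qi^3*t^30*ti^36 = q*ti^6 := by linear_combination (q^4*qi^3*ti^6 + q^4*qi^3*t*ti^7 + q^4*qi^3*t^2*ti^8 + q^4*qi^3*t^3*ti^9 + q^4*qi^3*t^4*ti^10 + q^4*qi^3*t^5*ti^11 + q^4*qi^3*t^6*ti^12 + q^4*qi^3*t^7*ti^13 + q^4*qi^3*t^8*ti^14 + q^4*qi^3*t^9*ti^15 + q^4*qi^3*t^10*ti^16 + q^4*qi^3*t^11*ti^17 + q^4*qi^3*t^12*ti^18 + q^4*qi^3*t^13*ti^19 + q^4*qi^3*t^14*ti^20 + q^4*qi^3*t^15*ti^21 + q^4*qi^3*t^16*ti^22 + q^4*qi^3*t^17*ti^23 + q^4*qi^3*t^18*ti^24 + q^4*qi^3*t^19*ti^25 + q^4*qi^3*t^20*ti^26 + q^4*qi^3*t^21*ti^27 + q^4*qi^3*t^22*ti^28 + q^4*qi^3*t^23*ti^29 + q^4*qi^3*t^24*ti^30 + q^4*qi^3*t^25*ti^31 + q^4*qi^3*t^26*ti^32 + q^4*qi^3*t^27*ti^33 + q^4*qi^3*t^28*ti^34 + q^4*qi^3*t^29*ti^35)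 * ht + (q*ti^6 + q^2*qi*ti^6 + q^3*qi^2*ti^6) * hq
  have f37 : q^4*qi^3*t^33*ti^36 = q*ti^3 := by linear_combination (q^4*qi^3*ti^3 + q^4*qi^3*t*ti^4 + q^4*qi^3*t^2*ti^5 + q^4*qi^3*t^3*ti^6 + q^4*qi^3*t^4*ti^7 + q^4*qi^3*t^5*ti^8 + q^4*qi^3*t^6*ti^9 + q^4*qi^3*t^7*ti^10 + q^4*qi^3*t^8*ti^11 + q^4*qi^3*t^9*ti^12 + q^4*qi^3*t^10*ti^13 + q^4*qi^3*t^11*ti^14 + q^4*qi^3*t^12*ti^15 + q^4*qi^3*t^13*ti^16 + q^4*qi^3*t^14*ti^17 + q^4*qi^3*t^15*ti^18 + q^4*qi^3*t^16*ti^19 + q^4*qi^3*t^17*ti^20 + q^4*qi^3*t^18*ti^21 + q^4*qi^3*t^19*ti^22 + q^4*qi^3*t^20*ti^23 + q^4*qi^3*t^21*ti^24 + q^4*qi^3*t^22*ti^25 + q^4*qi^3*t^23*ti^26 + q^4*qi^3*t^24*ti^27 + q^4*qi^3*t^25*ti^28 + q^4*qi^3*t^26*ti^29 + q^4*qi^3*t^27*ti^30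 + q^4*qi^3*t^28*ti^31 + q^4*qi^3*t^29*ti^32 + q^4*qi^3*t^30*ti^33 + q^4*qi^3*t^31*ti^34 + q^4*qi^3*t^32*ti^35) * ht + (q*ti^3 + q^2*qi*ti^3 + q^3*qi^2*ti^3) * hq
  have f38 : q^5*qi*t^17*ti^12 = q^4*t^5 := by linear_combination (q^5*qi*t^5 + q^5*qi*t^6*ti + q^5*qi*t^7*ti^2 + q^5*qi*t^8*ti^3 + q^5*qi*t^9*ti^4 + q^5*qi*t^10*ti^5 + q^5*qi*t^11*ti^6 + q^5*qi*t^12*ti^7 + q^5*qi*t^13*ti^8 + q^5*qi*t^14*ti^9 + q^5*qi*t^15*ti^10 + q^5*qi*t^16*ti^11) * ht + (q^4*t^5) * hq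
  have f39 : q^5*qi*t^18*ti^12 = q^4*t^6 := by linear_combination (q^5*qi*t^6 + q^5*qi*t^7*ti + q^5*qi*t^8*ti^2 + q^5*qi*t^9*ti^3 + q^5*qi*t^10*ti^4 + q^5*qi*t^11*ti^5 + q^5*qi*t^12*ti^6 + q^5*qi*t^13*ti^7 + q^5*qi*t^14*ti^8 + q^5*qi*t^15*ti^9 + q^5*qi*t^16*ti^10 + q^5*qi*t^17*ti^11) * ht + (q^4*t^6) * hq
  have f40 : q^5*qi*t^20*ti^12 = q^4*t^8 := by linear_combination (q^5*qi*t^8 + q^5*qi*t^9*ti + q^5*qi*t^10*ti^2 + q^5*qi*t^11*ti^3 + q^5*qi*t^12*ti^4 + q^5*qi*t^13*ti^5 + q^5*qi*t^14*ti^6 + q^5*qi*t^15*ti^7 + q^5*qi*t^16*ti^8 + q^5*qi*t^17*ti^9 + q^5*qi*t^18*ti^10 + q^5*qi*t^19*ti^11) * ht + (q^4*t^8) * hq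
  have f41 : q^5*qi*t^21*ti^12 = q^4*t^9 := by linear_combination (q^5*qi*t^9 + q^5*qi*t^10*ti + q^5*qi*t^11*ti^2 + q^5*qi*t^12*ti^3 + q^5*qi*t^13*ti^4 + q^5*qi*t^14*ti^5 + q^5*qi*t^15*ti^6 + q^5*qi*t^16*ti^7 + q^5*qi*t^17*ti^8 + q^5*qi*t^18*ti^9 + q^5*qi*t^19*ti^10 + q^5*qi*t^20*ti^11) * ht + (q^4*t^9) * hq
  have f42 : q^5*qi*t^22*ti^12 = q^4*t^10 := by linear_combination (q^5*qi*t^10 + q^5*qi*t^11*ti + q^5*qi*t^12*ti^2 + q^5*qi*t^13*ti^3 + q^5*qi*t^14*ti^4 + q^5*qi*t^15*ti^5 + q^5*qi*t^16*ti^6 + q^5*qi*t^17*ti^7 + q^5*qi*t^18*ti^8 + q^5*qi*t^19*ti^9 + q^5*qi*t^20*ti^10 + q^5*qi*t^21*ti^11) * ht + (q^4*t^10) * hq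
  have f43 : q^5*qi*t^24*ti^12 = q^4*t^12 := by linear_combination (q^5*qi*t^12 + q^5*qi*t^13*ti + q^5*qi*t^14*ti^2 + q^5*qi*t^15*ti^3 + q^5*qi*t^16*ti^4 + q^5*qi*t^17*ti^5 + q^5*qi*t^18*ti^6 + q^5*qi*t^19*ti^7 + q^5*qi*t^20*ti^8 + q^5*qi*t^21*ti^9 + q^5*qi*t^22*ti^10 + q^5*qi*t^23*ti^11) * ht + (q^4*t^12) * hq
  have f44 : q^5*qi*t^25*ti^12 = q^4*t^13 := by linear_combination (q^5*qi*t^13 + q^5*qi*t^14*ti + q^5*qi*t^15*ti^2 + q^5*qi*t^16*ti^3 + q^5*qi*t^17*ti^4 + q^5*qi*t^18*ti^5 + q^5*qi*t^19*ti^6 + q^5*qi*t^20*ti^7 + q^5*qi*t^21*ti^8 + q^5*qi*t^22*ti^9 + q^5*qi*t^23*ti^10 + q^5*qi*t^24*ti^11) * ht + (q^4*t^13) * hq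
  have f45 : q^5*qi*t^28*ti^12 = q^4*t^16 := by linear_combination (q^5*qi*t^16 + q^5*qi*t^17*ti + q^5*qi*t^18*ti^2 + q^5*qi*t^19*ti^3 + q^5*qi*t^20*ti^4 + q^5*qi*t^21*ti^5 + q^5*qi*t^22*ti^6 + q^5*qi*t^23*ti^7 + q^5*qi*t^24*ti^8 + q^5*qi*t^25*ti^9 + q^5*qi*t^26*ti^10 + q^5*qi*t^27*ti^11) * ht + (q^4*t^16) * hq
  have f46 : q^5*qi^2*t^22*ti^24 = q^3*ti^2 := by linear_combination (q^5*qi^2*ti^2 + q^5*qi^2*t*ti^3 + q^5*qi^2*t^2*ti^4 + q^5*qi^2*t^3*ti^5 + q^5*qi^2*t^4*ti^6 + q^5*qi^2*t^5*ti^7 + q^5*qi^2*t^6*ti^8 + q^5*qi^2*t^7*ti^9 + q^5*qi^2*t^8*ti^10 + q^5*qi^2*t^9*ti^11 + q^5*qi^2*t^10*ti^12 + q^5*qi^2*t^11*ti^13 + q^5*qi^2*t^12*ti^14 + q^5*qi^2*t^13*ti^15 + q^5*qi^2*t^14*ti^16 + q^5*qi^2*t^15*ti^17 + q^5*qi^2*t^16*ti^18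 + q^5*qi^2*t^17*ti^19 + q^5*qi^2*t^18*ti^20 + q^5*qi^2*t^19*ti^21 + q^5*qi^2*t^20*ti^22 + q^5*qi^2*t^21*ti^23) * ht + (q^3*ti^2 + q^4*qi*ti^2) * hq
  have f47 : q^5*qi^2*t^25*ti^24 = q^3*t := by linear_combination (q^5*qi^2*t + q^5*qi^2*t^2*ti + q^5*qi^2*t^3*ti^2 + q^5*qi^2*t^4*ti^3 + q^5*qi^2*t^5*ti^4 + q^5*qi^2*t^6*ti^5 + q^5*qi^2*t^7*ti^6 + q^5*qi^2*t^8*ti^7 + q^5*qi^2*t^9*ti^8 + q^5*qi^2*t^10*ti^9 + q^5*qi^2*t^11*ti^10 + q^5*qi^2*t^12*ti^11 + q^5*qi^2*t^13*ti^12 + q^5*qi^2*t^14*ti^13 + q^5*qi^2*t^15*ti^14 + q^5*qi^2*t^16*ti^15 + q^5*qi^2*t^17*ti^16 + q^5*qi^2*t^18*ti^17 + q^5*qi^2*t^19*ti^18 + q^5*qi^2*t^20*ti^19 + q^5*qi^2*t^21*ti^20 + q^5*qi^2*t^22*ti^21 + q^5*qi^2*t^23*ti^22 + q^5*qi^2*t^24*ti^23)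 * ht + (q^3*t + q^4*qi*t) * hq
  have f48 : q^5*qi^2*t^26*ti^24 = q^3*t^2 := by linear_combination (q^5*qi^2*t^2 + q^5*qi^2*t^3*ti + q^5*qi^2*t^4*ti^2 + q^5*qi^2*t^5*ti^3 + q^5*qi^2*t^6*ti^4 + q^5*qi^2*t^7*ti^5 + q^5*qi^2*t^8*ti^6 + q^5*qi^2*t^9*ti^7 + q^5*qi^2*t^10*ti^8 + q^5*qi^2*t^11*ti^9 + q^5*qi^2*t^12*ti^10 + q^5*qi^2*t^13*ti^11 + q^5*qi^2*t^14*ti^12 + q^5*qi^2*t^15*ti^13 + q^5*qi^2*t^16*ti^14 + q^5*qi^2*t^17*ti^15 + q^5*qi^2*t^18*ti^16 + q^5*qi^2*t^19*ti^17 + q^5*qi^2*t^20*ti^18 + q^5*qi^2*t^21*ti^19 + q^5*qi^2*t^22*ti^20 + q^5*qi^2*t^23*ti^21 + q^5*qi^2*t^24*ti^22 + q^5*qi^2*t^25*ti^23) * ht + (q^3*t^2 + q^4*qi*t^2) * hq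
  have f49 : q^5*qi^2*t^28*ti^24 = q^3*t^4 := by linear_combination (q^5*qi^2*t^4 + q^5*qi^2*t^5*ti + q^5*qi^2*t^6*ti^2 + q^5*qi^2*t^7*ti^3 + q^5*qi^2*t^8*ti^4 + q^5*qi^2*t^9*ti^5 + q^5*qi^2*t^10*ti^6 + q^5*qi^2*t^11*ti^7 + q^5*qi^2*t^12*ti^8 + q^5*qi^2*t^13*ti^9 + q^5*qi^2*t^14*ti^10 + q^5*qi^2*t^15*ti^11 + q^5*qi^2*t^16*ti^12 + q^5*qi^2*t^17*ti^13 + q^5*qi^2*t^18*ti^14 + q^5*qi^2*t^19*ti^15 + q^5*qi^2*t^20*ti^16 + q^5*qi^2*t^21*ti^17 + q^5*qi^2*t^22*ti^18 + q^5*qi^2*t^23*ti^19 + q^5*qi^2*t^24*ti^20 + q^5*qi^2*t^25*ti^21 + q^5*qi^2*t^26*ti^22 + q^5*qi^2*t^27*ti^23) * ht + (q^3*t^4 + q^4*qi*t^4) * hq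
  have f50 : q^5*qi^2*t^29*ti^24 = q^3*t^5 := by linear_combination (q^5*qi^2*t^5 + q^5*qi^2*t^6*ti + q^5*qi^2*t^7*ti^2 + q^5*qi^2*t^8*ti^3 + q^5*qi^2*t^9*ti^4 + q^5*qi^2*t^10*ti^5 + q^5*qi^2*t^11*ti^6 + q^5*qi^2*t^12*ti^7 + q^5*qi^2*t^13*ti^8 + q^5*qi^2*t^14*ti^9 + q^5*qi^2*t^15*ti^10 + q^5*qi^2*t^16*ti^11 + q^5*qi^2*t^17*ti^12 + q^5*qi^2*t^18*ti^13 + q^5*qi^2*t^19*ti^14 + q^5*qi^2*t^20*ti^15 + q^5*qi^2*t^21*ti^16 + q^5*qi^2*t^22*ti^17 + q^5*qi^2*t^23*ti^18 + q^5*qi^2*t^24*ti^19 + q^5*qi^2*t^25*ti^20 + q^5*qi^2*t^26*ti^21 + q^5*qi^2*t^27*ti^22 + q^5*qi^2*t^28*ti^23) * ht + (q^3*t^5 + q^4*qi*t^5) * hq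
  have f51 : q^5*qi^2*t^30*ti^24 = q^3*t^6 := by linear_combination (q^5*qi^2*t^6 + q^5*qi^2*t^7*ti + q^5*qi^2*t^8*ti^2 + q^5*qi^2*t^9*ti^3 + q^5*qi^2*t^10*ti^4 + q^5*qi^2*t^11*ti^5 + q^5*qi^2*t^12*ti^6 + q^5*qi^2*t^13*ti^7 + q^5*qi^2*t^14*ti^8 + q^5*qi^2*t^15*ti^9 + q^5*qi^2*t^16*ti^10 + q^5*qi^2*t^17*ti^11 + q^5*qi^2*t^18*ti^12 + q^5*qi^2*t^19*ti^13 + q^5*qi^2*t^20*ti^14 + q^5*qi^2*t^21*ti^15 + q^5*qi^2*t^22*ti^16 + q^5*qi^2*t^23*ti^17 + q^5*qi^2*t^24*ti^18 + q^5*qi^2*t^25*ti^19 + q^5*qi^2*t^26*ti^20 + q^5*qi^2*t^27*ti^21 + q^5*qi^2*t^28*ti^22 + q^5*qi^2*t^29*ti^23) * ht + (q^3*t^6 + q^4*qi*t^6) * hq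
  have f52 : q^5*qi^2*t^32*ti^24 = q^3*t^8 := by linear_combination (q^5*qi^2*t^8 + q^5*qi^2*t^9*ti + q^5*qi^2*t^10*ti^2 + q^5*qi^2*t^11*ti^3 + q^5*qi^2*t^12*ti^4 + q^5*qi^2*t^13*ti^5 + q^5*qi^2*t^14*ti^6 + q^5*qi^2*t^15*ti^7 + q^5*qi^2*t^16*ti^8 + q^5*qi^2*t^17*ti^9 + q^5*qi^2*t^18*ti^10 + q^5*qi^2*t^19*ti^11 + q^5*qi^2*t^20*ti^12 + q^5*qi^2*t^21*ti^13 + q^5*qi^2*t^22*ti^14 + q^5*qi^2*t^23*ti^15 + q^5*qi^2*t^24*ti^16 + q^5*qi^2*t^25*ti^17 + q^5*qi^2*t^26*ti^18 + q^5*qi^2*t^27*ti^19 + q^5*qi^2*t^28*ti^20 + q^5*qi^2*t^29*ti^21 + q^5*qi^2*t^30*ti^22 + q^5*qi^2*t^31*ti^23) * ht + (q^3*t^8 + q^4*qi*t^8) * hq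
  have f53 : q^5*qi^2*t^33*ti^24 = q^3*t^9 := by linear_combination (q^5*qi^2*t^9 + q^5*qi^2*t^10*ti + q^5*qi^2*t^11*ti^2 + q^5*qi^2*t^12*ti^3 + q^5*qi^2*t^13*ti^4 + q^5*qi^2*t^14*ti^5 + q^5*qi^2*t^15*ti^6 + q^5*qi^2*t^16*ti^7 + q^5*qi^2*t^17*ti^8 + q^5*qi^2*t^18*ti^9 + q^5*qi^2*t^19*ti^10 + q^5*qi^2*t^20*ti^11 + q^5*qi^2*t^21*ti^12 + q^5*qi^2*t^22*ti^13 + q^5*qi^2*t^23*ti^14 + q^5*qi^2*t^24*ti^15 + q^5*qi^2*t^25*ti^16 + q^5*qi^2*t^26*ti^17 + q^5*qi^2*t^27*ti^18 + q^5*qi^2*t^28*ti^19 + q^5*qi^2*t^29*ti^20 + q^5*qi^2*t^30*ti^21 + q^5*qi^2*t^31*ti^22 + q^5*qi^2*t^32*ti^23) * ht + (q^3*t^9 + q^4*qi*t^9) * hq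
  have f54 : q^5*qi^3*t^30*ti^36 = q^2*ti^6 := by linear_combination (q^5*qi^3*ti^6 + q^5*qi^3*t*ti^7 + q^5*qi^3*t^2*ti^8 + q^5*qi^3*t^3*ti^9 + q^5*qi^3*t^4*ti^10 + q^5*qi^3*t^5*ti^11 + q^5*qi^3*t^6*ti^12 + q^5*qi^3*t^7*ti^13 + q^5*qi^3*t^8*ti^14 + q^5*qi^3*t^9*ti^15 + q^5*qi^3*t^10*ti^16 + q^5*qi^3*t^11*ti^17 + q^5*qi^3*t^12*ti^18 + q^5*qi^3*t^13*ti^19 + q^5*qi^3*t^14*ti^20 + q^5*qi^3*t^15*ti^21 + q^5*qi^3*t^16*ti^22 + q^5*qi^3*t^17*ti^23 + q^5*qi^3*t^18*ti^24 + q^5*qi^3*t^19*ti^25 + q^5*qi^3*t^20*ti^26 + q^5*qi^3*t^21*ti^27 + q^5*qi^3*t^22*ti^28 + q^5*qi^3*t^23*ti^29 + q^5*qi^3*t^24*ti^30 + q^5*qi^3*t^25*ti^31 + q^5*qi^3*t^26*ti^32 + q^5*qi^3*t^27*ti^33 + q^5*qi^3*t^28*ti^34 + q^5*qi^3*t^29*ti^35)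 * ht + (q^2*ti^6 + q^3*qi*ti^6 + q^4*qi^2*ti^6) * hq
  have f55 : q^5*qi^3*t^33*ti^36 = q^2*ti^3 := by linear_combination (q^5*qi^3*ti^3 + q^5*qi^3*t*ti^4 + q^5*qi^3*t^2*ti^5 + q^5*qi^3*t^3*ti^6 + q^5*qi^3*t^4*ti^7 + q^5*qi^3*t^5*ti^8 + q^5*qi^3*t^6*ti^9 + q^5*qi^3*t^7*ti^10 + q^5*qi^3*t^8*ti^11 + q^5*qi^3*t^9*ti^12 + q^5*qi^3*t^10*ti^13 + q^5*qi^3*t^11*ti^14 + q^5*qi^3*t^12*ti^15 + q^5*qi^3*t^13*ti^16 + q^5*qi^3*t^14*ti^17 + q^5*qi^3*t^15*ti^18 + q^5*qi^3*t^16*ti^19 + q^5*qi^3*t^17*ti^20 + q^5*qi^3*t^18*ti^21 + q^5*qi^3*t^19*ti^22 + q^5*qi^3*t^20*ti^23 + q^5*qi^3*t^21*ti^24 + q^5*qi^3*t^22*ti^25 + q^5*qi^3*t^23*ti^26 + q^5*qi^3*t^24*ti^27 + q^5*qi^3*t^25*ti^28 + q^5*qi^3*t^26*ti^29 + q^5*qi^3*t^27*ti^30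 + q^5*qi^3*t^28*ti^31 + q^5*qi^3*t^29*ti^32 + q^5*qi^3*t^30*ti^33 + q^5*qi^3*t^31*ti^34 + q^5*qi^3*t^32*ti^35) * ht + (q^2*ti^3 + q^3*qi*ti^3 + q^4*qi^2*ti^3) * hq
  have f56 : q^5*qi^3*t^34*ti^36 = q^2*ti^2 := by linear_combination (q^5*qi^3*ti^2 + q^5*qi^3*t*ti^3 + q^5*qi^3*t^2*ti^4 + q^5*qi^3*t^3*ti^5 + q^5*qi^3*t^4*ti^6 + q^5*qi^3*t^5*ti^7 + q^5*qi^3*t^6*ti^8 + q^5*qi^3*t^7*ti^9 + q^5*qi^3*t^8*ti^10 + q^5*qi^3*t^9*ti^11 + q^5*qi^3*t^10*ti^12 + q^5*qi^3*t^11*ti^13 + q^5*qi^3*t^12*ti^14 + q^5*qi^3*t^13*ti^15 + q^5*qi^3*t^14*ti^16 + q^5*qi^3*t^15*ti^17 + q^5*qi^3*t^16*ti^18 + q^5*qi^3*t^17*ti^19 + q^5*qi^3*t^18*ti^20 + q^5*qi^3*t^19*ti^21 + q^5*qi^3*t^20*ti^22 + q^5*qi^3*t^21*ti^23 + q^5*qi^3*t^22*ti^24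 + q^5*qi^3*t^23*ti^25 + q^5*qi^3*t^24*ti^26 + q^5*qi^3*t^25*ti^27 + q^5*qi^3*t^26*ti^28 + q^5*qi^3*t^27*ti^29 + q^5*qi^3*t^28*ti^30 + q^5*qi^3*t^29*ti^31 + q^5*qi^3*t^30*ti^32 + q^5*qi^3*t^31*ti^33 + q^5*qi^3*t^32*ti^34 + q^5*qi^3*t^33*ti^35) * ht + (q^2*ti^2 + q^3*qi*ti^2 + q^4*qi^2*ti^2) * hq
  have f57 : q^5*qi^3*t^37*ti^36 = q^2*t := by linear_combination (q^5*qi^3*t + q^5*qi^3*t^2*ti + q^5*qi^3*t^3*ti^2 + q^5*qi^3*t^4*ti^3 + q^5*qi^3*t^5*ti^4 + q^5*qi^3*t^6*ti^5 + q^5*qi^3*t^7*ti^6 + q^5*qi^3*t^8*ti^7 + q^5*qi^3*t^9*ti^8 + q^5*qi^3*t^10*ti^9 + q^5*qi^3*t^11*ti^10 + q^5*qi^3*t^12*ti^11 + q^5*qi^3*t^13*ti^12 + q^5*qi^3*t^14*ti^13 + q^5*qi^3*t^15*ti^14 + q^5*qi^3*t^16*ti^15 + q^5*qi^3*t^17*ti^16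 + q^5*qi^3*t^18*ti^17 + q^5*qi^3*t^19*ti^18 + q^5*qi^3*t^20*ti^19 + q^5*qi^3*t^21*ti^20 + q^5*qi^3*t^22*ti^21 + q^5*qi^3*t^23*ti^22 + q^5*qi^3*t^24*ti^23 + q^5*qi^3*t^25*ti^24 + q^5*qi^3*t^26*ti^25 + q^5*qi^3*t^27*ti^26 + q^5*qi^3*t^28*ti^27 + q^5*qi^3*t^29*ti^28 + q^5*qi^3*t^30*ti^29 + q^5*qi^3*t^31*ti^30 + q^5*qi^3*t^32*ti^31 + q^5*qi^3*t^33*ti^32 + q^5*qi^3*t^34*ti^33 + q^5*qi^3*t^35*ti^34 + q^5*qi^3*t^36*ti^35) * ht + (q^2*t + q^3*qi*t + q^4*qi^2*t) * hq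
  have f58 : q^6*qi*t^25*ti^12 = q^5*t^13 := by linear_combination (q^6*qi*t^13 + q^6*qi*t^14*ti + q^6*qi*t^15*ti^2 + q^6*qi*t^16*ti^3 + q^6*qi*t^17*ti^4 + q^6*qi*t^18*ti^5 + q^6*qi*t^19*ti^6 + q^6*qi*t^20*ti^7 + q^6*qi*t^21*ti^8 + q^6*qi*t^22*ti^9 + q^6*qi*t^23*ti^10 + q^6*qi*t^24*ti^11) * ht + (q^5*t^13) * hq
  have f59 : q^6*qi*t^28*ti^12 = q^5*t^16 := by linear_combination (q^6*qi*t^16 + q^6*qi*t^17*ti + q^6*qi*t^18*ti^2 + q^6*qi*t^19*ti^3 + q^6*qi*t^20*ti^4 + q^6*qi*t^21*ti^5 + q^6*qi*t^22*ti^6 + q^6*qi*t^23*ti^7 + q^6*qi*t^24*ti^8 + q^6*qi*t^25*ti^9 + q^6*qi*t^26*ti^10 + q^6*qi*t^27*ti^11) * ht + (q^5*t^16) * hq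
  have f60 : q^6*qi*t^29*ti^12 = q^5*t^17 := by linear_combination (q^6*qi*t^17 + q^6*qi*t^18*ti + q^6*qi*t^19*ti^2 + q^6*qi*t^20*ti^3 + q^6*qi*t^21*ti^4 + q^6*qi*t^22*ti^5 + q^6*qi*t^23*ti^6 + q^6*qi*t^24*ti^7 + q^6*qi*t^25*ti^8 + q^6*qi*t^26*ti^9 + q^6*qi*t^27*ti^10 + q^6*qi*t^28*ti^11) * ht + (q^5*t^17) * hq
  have f61 : q^6*qi*t^32*ti^12 = q^5*t^20 := by linear_combination (q^6*qi*t^20 + q^6*qi*t^21*ti + q^6*qi*t^22*ti^2 + q^6*qi*t^23*ti^3 + q^6*qi*t^24*ti^4 + q^6*qi*t^25*ti^5 + q^6*qi*t^26*ti^6 + q^6*qi*t^27*ti^7 + q^6*qi*t^28*ti^8 + q^6*qi*t^29*ti^9 + q^6*qi*t^30*ti^10 + q^6*qi*t^31*ti^11) * ht + (q^5*t^20) * hq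
  have f62 : q^6*qi^2*t^29*ti^24 = q^4*t^5 := by linear_combination (q^6*qi^2*t^5 + q^6*qi^2*t^6*ti + q^6*qi^2*t^7*ti^2 + q^6*qi^2*t^8*ti^3 + q^6*qi^2*t^9*ti^4 + q^6*qi^2*t^10*ti^5 + q^6*qi^2*t^11*ti^6 + q^6*qi^2*t^12*ti^7 + q^6*qi^2*t^13*ti^8 + q^6*qi^2*t^14*ti^9 + q^6*qi^2*t^15*ti^10 + q^6*qi^2*t^16*ti^11 + q^6*qi^2*t^17*ti^12 + q^6*qi^2*t^18*ti^13 + q^6*qi^2*t^19*ti^14 + q^6*qi^2*t^20*ti^15 + q^6*qi^2*t^21*ti^16 + q^6*qi^2*t^22*ti^17 + q^6*qi^2*t^23*ti^18 + q^6*qi^2*t^24*ti^19 + q^6*qi^2*t^25*ti^20 + q^6*qi^2*t^26*ti^21 + q^6*qi^2*t^27*ti^22 + q^6*qi^2*t^28*ti^23) * ht + (q^4*t^5 + q^5*qi*t^5) * hq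
  have f63 : q^6*qi^2*t^30*ti^24 = q^4*t^6 := by linear_combination (q^6*qi^2*t^6 + q^6*qi^2*t^7*ti + q^6*qi^2*t^8*ti^2 + q^6*qi^2*t^9*ti^3 + q^6*qi^2*t^10*ti^4 + q^6*qi^2*t^11*ti^5 + q^6*qi^2*t^12*ti^6 + q^6*qi^2*t^13*ti^7 + q^6*qi^2*t^14*ti^8 + q^6*qi^2*t^15*ti^9 + q^6*qi^2*t^16*ti^10 + q^6*qi^2*t^17*ti^11 + q^6*qi^2*t^18*ti^12 + q^6*qi^2*t^19*ti^13 + q^6*qi^2*t^20*ti^14 + q^6*qi^2*t^21*ti^15 + q^6*qi^2*t^22*ti^16 + q^6*qi^2*t^23*ti^17 + q^6*qi^2*t^24*ti^18 + q^6*qi^2*t^25*ti^19 + q^6*qi^2*t^26*ti^20 + q^6*qi^2*t^27*ti^21 + q^6*qi^2*t^28*ti^22 + q^6*qi^2*t^29*ti^23) * ht + (q^4*t^6 + q^5*qi*t^6) * hq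
  have f64 : q^6*qi^2*t^33*ti^24 = q^4*t^9 := by linear_combination (q^6*qi^2*t^9 + q^6*qi^2*t^10*ti + q^6*qi^2*t^11*ti^2 + q^6*qi^2*t^12*ti^3 + q^6*qi^2*t^13*ti^4 + q^6*qi^2*t^14*ti^5 + q^6*qi^2*t^15*ti^6 + q^6*qi^2*t^16*ti^7 + q^6*qi^2*t^17*ti^8 + q^6*qi^2*t^18*ti^9 + q^6*qi^2*t^19*ti^10 + q^6*qi^2*t^20*ti^11 + q^6*qi^2*t^21*ti^12 + q^6*qi^2*t^22*ti^13 + q^6*qi^2*t^23*ti^14 + q^6*qi^2*t^24*ti^15 + q^6*qi^2*t^25*ti^16 + q^6*qi^2*t^26*ti^17 + q^6*qi^2*t^27*ti^18 + q^6*qi^2*t^28*ti^19 + q^6*qi^2*t^29*ti^20 + q^6*qi^2*t^30*ti^21 + q^6*qi^2*t^31*ti^22 + q^6*qi^2*t^32*ti^23) * ht + (q^4*t^9 + q^5*qi*t^9) * hq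
  have f65 : q^6*qi^2*t^36*ti^24 = q^4*t^12 := by linear_combination (q^6*qi^2*t^12 + q^6*qi^2*t^13*ti + q^6*qi^2*t^14*ti^2 + q^6*qi^2*t^15*ti^3 + q^6*qi^2*t^16*ti^4 + q^6*qi^2*t^17*ti^5 + q^6*qi^2*t^18*ti^6 + q^6*qi^2*t^19*ti^7 + q^6*qi^2*t^20*ti^8 + q^6*qi^2*t^21*ti^9 + q^6*qi^2*t^22*ti^10 + q^6*qi^2*t^23*ti^11 + q^6*qi^2*t^24*ti^12 + q^6*qi^2*t^25*ti^13 + q^6*qi^2*t^26*ti^14 + q^6*qi^2*t^27*ti^15 + q^6*qi^2*t^28*ti^16 + q^6*qi^2*t^29*ti^17 + q^6*qi^2*t^30*ti^18 + q^6*qi^2*t^31*ti^19 + q^6*qi^2*t^32*ti^20 + q^6*qi^2*t^33*ti^21 + q^6*qi^2*t^34*ti^22 + q^6*qi^2*t^35*ti^23) * ht + (q^4*t^12 + q^5*qi*t^12) * hq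
  have f66 : q^6*qi^2*t^37*ti^24 = q^4*t^13 := by linear_combination (q^6*qi^2*t^13 + q^6*qi^2*t^14*ti + q^6*qi^2*t^15*ti^2 + q^6*qi^2*t^16*ti^3 + q^6*qi^2*t^17*ti^4 + q^6*qi^2*t^18*ti^5 + q^6*qi^2*t^19*ti^6 + q^6*qi^2*t^20*ti^7 + q^6*qi^2*t^21*ti^8 + q^6*qi^2*t^22*ti^9 + q^6*qi^2*t^23*ti^10 + q^6*qi^2*t^24*ti^11 + q^6*qi^2*t^25*ti^12 + q^6*qi^2*t^26*ti^13 + q^6*qi^2*t^27*ti^14 + q^6*qi^2*t^28*ti^15 + q^6*qi^2*t^29*ti^16 + q^6*qi^2*t^30*ti^17 + q^6*qi^2*t^31*ti^18 + q^6*qi^2*t^32*ti^19 + q^6*qi^2*t^33*ti^20 + q^6*qi^2*t^34*ti^21 + q^6*qi^2*t^35*ti^22 + q^6*qi^2*t^36*ti^23) * ht + (q^4*t^13 + q^5*qi*t^13) * hq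
  have f67 : q^6*qi^3*t^34*ti^36 = q^3*ti^2 := by linear_combination (q^6*qi^3*ti^2 + q^6*qi^3*t*ti^3 + q^6*qi^3*t^2*ti^4 + q^6*qi^3*t^3*ti^5 + q^6*qi^3*t^4*ti^6 + q^6*qi^3*t^5*ti^7 + q^6*qi^3*t^6*ti^8 + q^6*qi^3*t^7*ti^9 + q^6*qi^3*t^8*ti^10 + q^6*qi^3*t^9*ti^11 + q^6*qi^3*t^10*ti^12 + q^6*qi^3*t^11*ti^13 + q^6*qi^3*t^12*ti^14 + q^6*qi^3*t^13*ti^15 + q^6*qi^3*t^14*ti^16 + q^6*qi^3*t^15*ti^17 + q^6*qi^3*t^16*ti^18 + q^6*qi^3*t^17*ti^19 + q^6*qi^3*t^18*ti^20 + q^6*qi^3*t^19*ti^21 + q^6*qi^3*t^20*ti^22 + q^6*qi^3*t^21*ti^23 + q^6*qi^3*t^22*ti^24 + q^6*qi^3*t^23*ti^25 + q^6*qi^3*t^24*ti^26 + q^6*qi^3*t^25*ti^27 + q^6*qi^3*t^26*ti^28 + q^6*qi^3*t^27*ti^29 + q^6*qi^3*t^28*ti^30 + q^6*qi^3*t^29*ti^31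 + q^6*qi^3*t^30*ti^32 + q^6*qi^3*t^31*ti^33 + q^6*qi^3*t^32*ti^34 + q^6*qi^3*t^33*ti^35) * ht + (q^3*ti^2 + q^4*qi*ti^2 + q^5*qi^2*ti^2) * hq
  have f68 : q^6*qi^3*t^37*ti^36 = q^3*t := by linear_combination (q^6*qi^3*t + q^6*qi^3*t^2*ti + q^6*qi^3*t^3*ti^2 + q^6*qi^3*t^4*ti^3 + q^6*qi^3*t^5*ti^4 + q^6*qi^3*t^6*ti^5 + q^6*qi^3*t^7*ti^6 + q^6*qi^3*t^8*ti^7 + q^6*qi^3*t^9*ti^8 + q^6*qi^3*t^10*ti^9 + q^6*qi^3*t^11*ti^10 + q^6*qi^3*t^12*ti^11 + q^6*qi^3*t^13*ti^12 + q^6*qi^3*t^14*ti^13 + q^6*qi^3*t^15*ti^14 + q^6*qi^3*t^16*ti^15 + q^6*qi^3*t^17*ti^16 + q^6*qi^3*t^18*ti^17 + q^6*qi^3*t^19*ti^18 + q^6*qi^3*t^20*ti^19 + q^6*qi^3*t^21*ti^20 + q^6*qi^3*t^22*ti^21 + q^6*qi^3*t^23*ti^22 + q^6*qi^3*t^24*ti^23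 + q^6*qi^3*t^25*ti^24 + q^6*qi^3*t^26*ti^25 + q^6*qi^3*t^27*ti^26 + q^6*qi^3*t^28*ti^27 + q^6*qi^3*t^29*ti^28 + q^6*qi^3*t^30*ti^29 + q^6*qi^3*t^31*ti^30 + q^6*qi^3*t^32*ti^31 + q^6*qi^3*t^33*ti^32 + q^6*qi^3*t^34*ti^33 + q^6*qi^3*t^35*ti^34 + q^6*qi^3*t^36*ti^35) * ht + (q^3*t + q^4*qi*t + q^5*qi^2*t) * hq
  have f69 : q^6*qi^3*t^38*ti^36 = q^3*t^2 := by linear_combination (q^6*qi^3*t^2 + q^6*qi^3*t^3*ti + q^6*qi^3*t^4*ti^2 + q^6*qi^3*t^5*ti^3 + q^6*qi^3*t^6*ti^4 + q^6*qi^3*t^7*ti^5 + q^6*qi^3*t^8*ti^6 + q^6*qi^3*t^9*ti^7 + q^6*qi^3*t^10*ti^8 + q^6*qi^3*t^11*ti^9 + q^6*qi^3*t^12*ti^10 + q^6*qi^3*t^13*ti^11 + q^6*qi^3*t^14*ti^12 + q^6*qi^3*t^15*ti^13 + q^6*qi^3*t^16*ti^14 + q^6*qi^3*t^17*ti^15 +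 q^6*qi^3*t^18*ti^16 + q^6*qi^3*t^19*ti^17 + q^6*qi^3*t^20*ti^18 + q^6*qi^3*t^21*ti^19 + q^6*qi^3*t^22*ti^20 + q^6*qi^3*t^23*ti^21 + q^6*qi^3*t^24*ti^22 + q^6*qi^3*t^25*ti^23 + q^6*qi^3*t^26*ti^24 + q^6*qi^3*t^27*ti^25 + q^6*qi^3*t^28*ti^26 + q^6*qi^3*t^29*ti^27 + q^6*qi^3*t^30*ti^28 + q^6*qi^3*t^31*ti^29 + q^6*qi^3*t^32*ti^30 + q^6*qi^3*t^33*ti^31 + q^6*qi^3*t^34*ti^32 + q^6*qi^3*t^35*ti^33 + q^6*qi^3*t^36*ti^34 + q^6*qi^3*t^37*ti^35) * ht + (q^3*t^2 + q^4*qi*t^2 + q^5*qi^2*t^2) * hq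
  have f70 : q^6*qi^3*t^41*ti^36 = q^3*t^5 := by linear_combination (q^6*qi^3*t^5 + q^6*qi^3*t^6*ti + q^6*qi^3*t^7*ti^2 + q^6*qi^3*t^8*ti^3 + q^6*qi^3*t^9*ti^4 + q^6*qi^3*t^10*ti^5 + q^6*qi^3*t^11*ti^6 + q^6*qi^3*t^12*ti^7 + q^6*qi^3*t^13*ti^8 + q^6*qi^3*t^14*ti^9 + q^6*qi^3*t^15*ti^10 + q^6*qi^3*t^16*ti^11 + q^6*qi^3*t^17*ti^12 + q^6*qi^3*t^18*ti^13 + q^6*qi^3*t^19*ti^14 + q^6*qi^3*t^20*ti^15 + q^6*qi^3*t^21*ti^16 + q^6*qi^3*t^22*ti^17 + q^6*qi^3*t^23*ti^18 + q^6*qi^3*t^24*ti^19 + q^6*qi^3*t^25*ti^20 + q^6*qi^3*t^26*ti^21 + q^6*qi^3*t^27*ti^22 + q^6*qi^3*t^28*ti^23 + q^6*qi^3*t^29*ti^24 + q^6*qi^3*t^30*ti^25 + q^6*qi^3*t^31*ti^26 + q^6*qi^3*t^32*ti^27 + q^6*qi^3*t^33*ti^28 + q^6*qi^3*t^34*ti^29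 + q^6*qi^3*t^35*ti^30 + q^6*qi^3*t^36*ti^31 + q^6*qi^3*t^37*ti^32 + q^6*qi^3*t^38*ti^33 + q^6*qi^3*t^39*ti^34 + q^6*qi^3*t^40*ti^35) * ht + (q^3*t^5 + q^4*qi*t^5 + q^5*qi^2*t^5) * hq
  have f71 : q^6*qi^4*t^42*ti^48 = q^2*ti^6 := by linear_combination (q^6*qi^4*ti^6 + q^6*qi^4*t*ti^7 + q^6*qi^4*t^2*ti^8 + q^6*qi^4*t^3*ti^9 + q^6*qi^4*t^4*ti^10 + q^6*qi^4*t^5*ti^11 + q^6*qi^4*t^6*ti^12 + q^6*qi^4*t^7*ti^13 + q^6*qi^4*t^8*ti^14 + q^6*qi^4*t^9*ti^15 + q^6*qi^4*t^10*ti^16 + q^6*qi^4*t^11*ti^17 + q^6*qi^4*t^12*ti^18 + q^6*qi^4*t^13*ti^19 + q^6*qi^4*t^14*ti^20 + q^6*qi^4*t^15*ti^21 + q^6*qi^4*t^16*ti^22 + q^6*qi^4*t^17*ti^23 + q^6*qi^4*t^18*ti^24 + q^6*qi^4*t^19*ti^25 + q^6*qi^4*t^20*ti^26 + q^6*qi^4*t^21*ti^27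 + q^6*qi^4*t^22*ti^28 + q^6*qi^4*t^23*ti^29 + q^6*qi^4*t^24*ti^30 + q^6*qi^4*t^25*ti^31 + q^6*qi^4*t^26*ti^32 + q^6*qi^4*t^27*ti^33 + q^6*qi^4*t^28*ti^34 + q^6*qi^4*t^29*ti^35 + q^6*qi^4*t^30*ti^36 + q^6*qi^4*t^31*ti^37 + q^6*qi^4*t^32*ti^38 + q^6*qi^4*t^33*ti^39 + q^6*qi^4*t^34*ti^40 + q^6*qi^4*t^35*ti^41 + q^6*qi^4*t^36*ti^42 + q^6*qi^4*t^37*ti^43 + q^6*qi^4*t^38*ti^44 + q^6*qi^4*t^39*ti^45 + q^6*qi^4*t^40*ti^46 + q^6*qi^4*t^41*ti^47) * ht + (q^2*ti^6 + q^3*qi*ti^6 + q^4*qi^2*ti^6 + q^5*qi^3*ti^6) * hq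
  simp only [HD43]
  linear_combination (-1) * f0 + (-1) * f1 + (-1) * f2 + (-1) * f3 + (-1) * f4 + (-2) * f5 + (-1) * f6 + f7 + (-1) * f8 + (-1) * f9 + (-3) * f10 + (-2) * f11 + (-2) * f12 + (-2) * f13 + (-1) * f14 + f15 + 2 * f16 + f17 + f18 + f19 + (-1) * f20 + (-1) * f21 + (-1) * f22 + (-1) * f23 + (-3) * f24 + (-2) * f25 + (-2) * f26 + (-2) * f27 + (-1) * f28 + f29 + 2 * f30 + f31 + 3 * f32 + f33 + f34 + f35 + (-1) * f36 + (-1) * f37 + (-1) * f38 + (-1) * f39 + (-1) * f40 + (-3) * f41 + (-1) * f42 + (-2) * f43 + (-2) * f44 + (-1) * f45 + f46 + 2 * f47 + 2 * f48 + f49 + 3 * f50 + f51 + f52 + f53 + (-1) * f54 + (-1) * f55 + (-1) * f56 + (-1) * f57 + (-1) * f58 + (-1) * f59 + (-1) * f60 + (-1) * f61 + f62 + f63 + 2 * f64 + f65 + f66 + (-1) * f67 + (-1) * f68 + (-1) * f69 + (-1) * f70 + f71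


lemma hq_qt : qv * qiv = 1 := by
  simp only [qv, qiv, ← map_mul, ← LaurentPolynomial.T_add]
  norm_num

lemma ht_qt : tv * tiv = 1 := by
  simp only [tv, tiv, ← LaurentPolynomial.T_add]
  norm_num

/-- The five specialization identities of the E6 hyperpolynomial of the (4,3) torus knot
in the Laurent polynomial ring ℤ[q^{±1}, t^{±1}]. -/
theorem E6_hyperpolynomial_T43_specializations :
    HD43 qv tv (-1) = JDE6_43 qv tv ∧
    HD43 qv tv (-(tiv^4)) = JDD5_43 qv tv ∧
    HD43 qv tv (-(tiv^5)) = 1 + qv*tv + qv^2*tv + qv^2*tv^2 + qv^3*tv^3 + qv^3*tv^14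
      - qv*tv^7 - qv^2*tv^7 - qv^2*tv^8 - qv^3*tv^8 - qv^3*tv^9 ∧
    HD43 qv tv (-(tiv^8)) = 1 ∧
    HD43 qv tv (-(qiv * tiv^12)) = qv^6 * tv^24 := by
  exact ⟨key1 qv tv qiv tiv hq_qt ht_qt, key2 qv tv qiv tiv hq_qt ht_qt, key3 qv tv qiv tiv hq_qt ht_qt, key4 qv tv qiv tiv hq_qt ht_qt, key5 qv tv qiv tiv hq_qt ht_qt⟩
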